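/- arXiv:2205.03060 — 10 statements merged into one kernel-verified Lean document; each statement's English description precedes it below -/
import Mathlib

section
/- Let R = (Σ, I, T) be a regular transition system and b ≥ 0. Then Ind_b(R) is an inductive invariant of R, and moreover Ind_b(R) ⊆ S for every inductive invariant S of R that is b-bounded. -/
/-- A regular transition system: an NFA `I` over `Σ` for the initial
configurations and a transducer (an NFA over `Σ × Σ`) `T` for the transitions. -/
structure RTS (Sig QI QT : Type) where
  I : NFA Sig QI
  T : NFA (Sig × Sig) QT

/-- `w ⇝ u`: the equal-length pair `(w,u)`, identified with the zipped word over
`Σ × Σ`, is accepted by the transducer. -/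
def RTS.Step {Sig QI QT : Type} (R : RTS Sig QI QT) (w u : List Sig) : Prop :=
  w.length = u.length ∧ w.zip u ∈ R.T.accepts

/-- `Reach(R)`: configurations reachable from some initial configuration under the
reflexive-transitive closure of `⇝`. -/
def RTS.Reach {Sig QI QT : Type} (R : RTS Sig QI QT) : Set (List Sig) :=
  { w | ∃ u ∈ R.I.accepts, Relation.ReflTransGen R.Step u w }

/-- A `b`-formula (of length `φ.length`) is a word over the alphabet of
`b`-tuples of subsets of `Σ`. -/
abbrev BFormula (Sig : Type) (b : ℕ) := List (Fin b → Set Sig)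

/-- `w ⊨ φ` iff `|w| ≠ |φ|`, or `|w| = |φ|` and for every clause `i` there is a
position `j` with `w[j] ∈ φ[j]_i`. -/
def BSat {Sig : Type} {b : ℕ} (w : List Sig) (φ : BFormula Sig b) : Prop :=
  w.length ≠ φ.length ∨
    ∀ i : Fin b, ∃ (j : ℕ) (h₁ : j < w.length) (h₂ : j < φ.length),
      w.get ⟨j, h₁⟩ ∈ φ.get ⟨j, h₂⟩ i

/-- A set of configurations is inductive if it is closed under `⇝`. -/
def IsInductiveSet {Sig QI QT : Type} (R : RTS Sig QI QT) (S : Set (List Sig)) : Prop :=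
  ∀ w ∈ S, ∀ u, R.Step w u → u ∈ S

/-- A `b`-formula is inductive if the set of words satisfying it is inductive. -/
def IsInductiveBFormula {Sig QI QT : Type} {b : ℕ} (R : RTS Sig QI QT)
    (φ : BFormula Sig b) : Prop :=
  ∀ w u, BSat w φ → R.Step w u → BSat u φ

/-- `u ⇝_b w`: every inductive `b`-formula satisfied by `u` is satisfied by `w`. -/
def BPotReach {Sig QI QT : Type} (b : ℕ) (R : RTS Sig QI QT) (u w : List Sig) : Prop :=
  ∀ φ : BFormula Sig b, IsInductiveBFormula R φ → BSat u φ → BSat w φ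

/-- `Ind_b(R) = { w : u ⇝_b w for some initial u }`. -/
def Ind {Sig QI QT : Type} (b : ℕ) (R : RTS Sig QI QT) : Set (List Sig) :=
  { w | ∃ u ∈ R.I.accepts, BPotReach b R u w }

/-- A set `S` is `b`-bounded if for every length `ℓ` there is a `b`-formula of
length `ℓ` whose satisfying words of length `ℓ` are exactly `S ∩ Σ^ℓ`. -/
def IsBBounded {Sig : Type} (b : ℕ) (S : Set (List Sig)) : Prop :=
  ∀ ℓ : ℕ, ∃ φ : BFormula Sig b, φ.length = ℓ ∧
    ∀ w : List Sig, w.length = ℓ → (w ∈ S ↔ BSat w φ)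

/-- Proposition, part 1: `Ind_b(R)` is an inductive invariant, and
`Ind_b(R) ⊆ S` for every inductive invariant `S` of `R` that is `b`-bounded. -/
theorem Ind_isInductiveInvariant_and_strongest
    {Sig QI QT : Type} [Fintype Sig] [Fintype QI] [Fintype QT]
    (R : RTS Sig QI QT) (b : ℕ) :
    (IsInductiveSet R (Ind b R) ∧ R.Reach ⊆ Ind b R) ∧
    ∀ S : Set (List Sig),
      IsInductiveSet R S → R.Reach ⊆ S → IsBBounded b S → Ind b R ⊆ S := by
  refine ⟨⟨?_, ?_⟩, ?_⟩
  · rintro w ⟨u, hu, hpr⟩ v hstep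
    exact ⟨u, hu, fun φ hind hsat => hind w v (hpr φ hind hsat) hstep⟩
  · rintro w ⟨u, hu, hrt⟩
    refine ⟨u, hu, fun φ hind hsat => ?_⟩
    induction hrt with
    | refl => exact hsat
    | tail _ hstep ih => exact hind _ _ ih hstep
  · rintro S hSind hSinv hSb w ⟨u, hu, hpr⟩
    obtain ⟨φ, hlen, hφ⟩ := hSb w.length
    have hindφ : IsInductiveBFormula R φ := by
      intro x y hx hstep
      by_cases hy : y.length = w.length
      · have hxl : x.length = w.length := hstep.1.trans hy
        right
        have hxS : x ∈ S := by
          rw [hφ x hxl]; exact hx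
        have := (hφ y hy).mp (hSind x hxS y hstep)
        exact this.resolve_left (by simp [hy, hlen])
      · exact Or.inl (by simp [hy, hlen])
    have husat : BSat u φ := by
      by_cases hul : u.length = w.length
      · exact (hφ u hul).mp (hSinv ⟨u, hu, Relation.ReflTransGen.refl⟩)
      · exact Or.inl (by simp [hul, hlen])
    have := hpr φ hindφ husat
    exact (hφ w rfl).mpr this
end

section
/- Let R = (Σ, I, T) be a regular transition system. Then Reach(R) = ⋂_{b=0}^∞ Ind_b(R), i.e., a configuration is reachable if and only if it belongs to Ind_b(R) for every b ≥ 0. -/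
/-- Proposition, part 3: `Reach(R) = ⋂_{b=0}^∞ Ind_b(R)`: a
configuration is reachable iff it belongs to `Ind_b(R)` for every `b ≥ 0`. -/
theorem Reach_eq_iInter_Ind
    {Sig QI QT : Type} [Fintype Sig] [Fintype QI] [Fintype QT]
    (R : RTS Sig QI QT) :
    R.Reach = ⋂ b : ℕ, Ind b R := by
  ext w
  simp only [Set.mem_iInter]
  constructor
  · rintro ⟨u, hu, hsteps⟩ b
    refine ⟨u, hu, fun φ hφ hu' => ?_⟩
    induction hsteps with
    | refl => exact hu'
    | tail _ hstep ih => exact hφ _ _ ih hstep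
  · intro h
    set ℓ := w.length with hℓ
    have hBfin : {v : List Sig | v.length = ℓ ∧ v ∉ R.Reach}.Finite :=
      (List.finite_length_eq Sig ℓ).subset (fun v hv => hv.1)
    set F := hBfin.toFinset with hF
    set b := F.card with hb
    let e : F ≃ Fin b := F.equivFin
    let v : Fin b → List Sig := fun i => (e.symm i : List Sig)
    have hvmem : ∀ i, (v i).length = ℓ ∧ v i ∉ R.Reach := by
      intro i
      have := (e.symm i).2
      exact hBfin.mem_toFinset.mp this
    have hvlen : ∀ i, (v i).length = ℓ := fun i => (hvmem i).1
    set φ : BFormula Sig b := List.ofFn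
      (fun j : Fin ℓ => fun i : Fin b =>
        {a : Sig | a ≠ (v i).get (Fin.cast (hvlen i).symm j)}) with hφdef
    have hφlen : φ.length = ℓ := by simp [hφdef]
    -- satisfaction characterization for words of length ℓ
    have sat_iff : ∀ x : List Sig, x.length = ℓ → (BSat x φ ↔ ∀ i, x ≠ v i) := by
      intro x hx
      have hlen : x.length = φ.length := by rw [hφlen, hx]
      unfold BSat
      constructor
      · intro hs i hxv
        rcases hs with hs | hs
        · exact hs hlen
        obtain ⟨j, h₁, h₂, hj⟩ := hs i
        rw [List.get_ofFn] at hj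
        apply hj
        subst hxv
        rfl
      · intro hs
        right
        intro i
        have hne := hs i
        have : ¬ ∀ (j : ℕ) (h₁ : j < x.length) (h₂ : j < (v i).length),
            x.get ⟨j, h₁⟩ = (v i).get ⟨j, h₂⟩ := by
          intro hall
          exact hne (List.ext_get (by rw [hx, hvlen i]) hall)
        push_neg at this
        obtain ⟨j, h₁, h₂, hj⟩ := this
        refine ⟨j, by omega, by omega, ?_⟩
        rw [List.get_ofFn]
        simpa using hj
    have key : ∀ x : List Sig, x.length = ℓ → (x ∈ R.Reach ↔ BSat x φ) := by
      intro x hx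
      rw [sat_iff x hx]
      constructor
      · intro hr i hxv
        exact (hvmem i).2 (hxv ▸ hr)
      · intro hs
        by_contra hnr
        have hxF : x ∈ F := by rw [hF, Set.Finite.mem_toFinset]; exact ⟨hx, hnr⟩
        have : x = v (e ⟨x, hxF⟩) := by simp [v, e]
        exact hs _ this
    have hind : IsInductiveBFormula R φ := by
      intro x u hx hstep
      by_cases hxl : x.length = ℓ
      · have hul : u.length = ℓ := by rw [← hstep.1]; exact hxl
        rw [← key x hxl] at hx
        rw [← key u hul]
        obtain ⟨u0, hu0, hsteps⟩ := hx
        exact ⟨u0, hu0, hsteps.tail hstep⟩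
      · left
        rw [hφlen, ← hstep.1]
        exact hxl
    obtain ⟨u, hu, hpr⟩ := h b
    have husat : BSat u φ := by
      by_cases hul : u.length = ℓ
      · rw [← key u hul]; exact ⟨u, hu, Relation.ReflTransGen.refl⟩
      · left; rw [hφlen]; exact hul
    have := hpr φ hind husat
    rw [← key w rfl] at this
    exact this
end

section
/- Let R = (Σ, I, T) be a regular transition system where the transducer T has n_T states, and let V be a deterministic interpreter over Σ×Γ with n_V states. Then there exists an NFA over Γ whose state type has cardinality at most n_T·n_V² and whose language is the complement of Inductive(V), i.e., the set of all W ∈ Γ* such that there exist u, w ∈ Σ* with u ⇝ w, u ⊨_V W and not w ⊨_V W. -/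
/-- `w ⊨_V W`: the equal-length pair `(w, W)`, identified with the zipped word
over `Σ × Γ`, is accepted by the deterministic interpreter `V`. -/
def Models {Sig Gam QV : Type} (V : DFA (Sig × Gam) QV) (w : List Sig)
    (W : List Gam) : Prop :=
  w.length = W.length ∧ w.zip W ∈ V.accepts

/-- A representation `W ∈ Γ*` is inductive if `u ⇝ w` and `u ⊨_V W` imply
`w ⊨_V W`. -/
def InductiveRep {Sig Gam QI QT QV : Type} (R : RTS Sig QI QT)
    (V : DFA (Sig × Gam) QV) (W : List Gam) : Prop :=
  ∀ u w : List Sig, R.Step u w → Models V u W → Models V w W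

/-- `u ⇝*_V w`: every inductive representation satisfied by `u` is satisfied
by `w`. -/
def PotReachV {Sig Gam QI QT QV : Type} (R : RTS Sig QI QT)
    (V : DFA (Sig × Gam) QV) (u w : List Sig) : Prop :=
  ∀ W : List Gam, InductiveRep R V W → Models V u W → Models V w W

/-- `Ind_V(R) = { w : u ⇝*_V w for some initial configuration u }`. -/
def IndV {Sig Gam QI QT QV : Type} (R : RTS Sig QI QT)
    (V : DFA (Sig × Gam) QV) : Set (List Sig) :=
  { w | ∃ u ∈ R.I.accepts, PotReachV R V u w }

/-! Reading `W` letter by letter, an NFA guesses the letters of `u` and `w` and tracks a run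
of `T` on `(u, w)` together with the two runs of `V` on `(u, W)` and `(w, W)`. Because `V` is
deterministic, `¬ w ⊨_V W` is checked by a single run, ending outside `V.accept`. -/
def nonInductiveNFA {Sig Gam QT QV : Type} (T : NFA (Sig × Sig) QT)
    (V : DFA (Sig × Gam) QV) : NFA Gam (QT × QV × QV) where
  step s g := { s' | ∃ a b : Sig, s'.1 ∈ T.step s.1 (a, b) ∧
    s'.2.1 = V.step s.2.1 (a, g) ∧ s'.2.2 = V.step s.2.2 (b, g) }
  start := { s | s.1 ∈ T.start ∧ s.2.1 = V.start ∧ s.2.2 = V.start }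
  accept := { s | s.1 ∈ T.accept ∧ s.2.1 ∈ V.accept ∧ s.2.2 ∉ V.accept }

section nonInductiveNFA

variable {Sig Gam QT QV : Type} (T : NFA (Sig × Sig) QT) (V : DFA (Sig × Gam) QV)

theorem mem_nonInductiveNFA_evalFrom_singleton (t t' : QT) (p p' q q' : QV) (W : List Gam) :
    (t', p', q') ∈ (nonInductiveNFA T V).evalFrom {(t, p, q)} W ↔
      ∃ u w : List Sig, u.length = W.length ∧ w.length = W.length ∧
        t' ∈ T.evalFrom {t} (u.zip w) ∧
        V.evalFrom p (u.zip W) = p' ∧ V.evalFrom q (w.zip W) = q' := by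
  induction W generalizing t p q with
  | nil =>
    simp [eq_comm]
  | cons g W ih =>
    rw [NFA.evalFrom_cons, NFA.stepSet_singleton, NFA.mem_evalFrom_iff_exists]
    constructor
    · rintro ⟨⟨t₁, p₁, q₁⟩, ⟨a, b, hT, rfl, rfl⟩, h⟩
      obtain ⟨u, w, hu, hw, hT₁, rfl, rfl⟩ := (ih t₁ _ _).mp h
      refine ⟨a :: u, b :: w, by simp [hu], by simp [hw], ?_, rfl, rfl⟩
      rw [List.zip_cons_cons, NFA.evalFrom_cons, NFA.stepSet_singleton,
        NFA.mem_evalFrom_iff_exists]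
      exact ⟨t₁, hT, hT₁⟩
    · rintro ⟨_ | ⟨a, u⟩, _ | ⟨b, w⟩, hu, hw, hT, rfl, rfl⟩
      · simp at hu
      · simp at hu
      · simp at hw
      rw [List.zip_cons_cons, NFA.evalFrom_cons, NFA.stepSet_singleton,
        NFA.mem_evalFrom_iff_exists] at hT
      obtain ⟨t₁, hT, hT₁⟩ := hT
      exact ⟨(t₁, V.step p (a, g), V.step q (b, g)), ⟨a, b, hT, rfl, rfl⟩,
        (ih _ _ _).mpr ⟨u, w, by simpa using hu, by simpa using hw, hT₁, rfl, rfl⟩⟩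

theorem mem_nonInductiveNFA_accepts (W : List Gam) :
    W ∈ (nonInductiveNFA T V).accepts ↔
      ∃ u w : List Sig, u.length = W.length ∧ w.length = W.length ∧
        u.zip w ∈ T.accepts ∧ u.zip W ∈ V.accepts ∧ w.zip W ∉ V.accepts := by
  rw [NFA.mem_accepts]
  constructor
  · rintro ⟨⟨t', p', q'⟩, ⟨hT', hp', hq'⟩, h⟩
    obtain ⟨⟨t, p, q⟩, ⟨hT, rfl, rfl⟩, h⟩ := NFA.mem_evalFrom_iff_exists.mp h
    obtain ⟨u, w, hu, hw, hTu, rfl, rfl⟩ :=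
      (mem_nonInductiveNFA_evalFrom_singleton T V ..).mp h
    exact ⟨u, w, hu, hw, ⟨t', hT', NFA.mem_evalFrom_iff_exists.mpr ⟨t, hT, hTu⟩⟩, hp', hq'⟩
  · rintro ⟨u, w, hu, hw, ⟨t', hT', hTu⟩, hp, hq⟩
    obtain ⟨t, hT, hTu⟩ := NFA.mem_evalFrom_iff_exists.mp hTu
    exact ⟨(t', V.eval (u.zip W), V.eval (w.zip W)), ⟨hT', hp, hq⟩,
      NFA.mem_evalFrom_iff_exists.mpr ⟨(t, V.start, V.start), ⟨hT, rfl, rfl⟩,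
        (mem_nonInductiveNFA_evalFrom_singleton T V ..).mpr ⟨u, w, hu, hw, hTu, rfl, rfl⟩⟩⟩

end nonInductiveNFA

theorem nfa_for_nonInductive_reps_general
    {Sig Gam QI QT QV : Type}
    [Fintype QT] [Fintype QV]
    (R : RTS Sig QI QT) (V : DFA (Sig × Gam) QV) :
    ∃ (Q : Type) (_ : Fintype Q) (B : NFA Gam Q),
      Fintype.card Q ≤ Fintype.card QT * Fintype.card QV ^ 2 ∧
      ∀ W : List Gam,
        W ∈ B.accepts ↔
          ∃ u w : List Sig, R.Step u w ∧ Models V u W ∧ ¬ Models V w W := by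
  refine ⟨QT × QV × QV, inferInstance, nonInductiveNFA R.T V,
    (by simp [Fintype.card_prod, sq]), fun W => ?_⟩
  rw [mem_nonInductiveNFA_accepts]
  constructor
  · rintro ⟨u, w, hu, hw, hT, hu', hw'⟩
    exact ⟨u, w, ⟨hu.trans hw.symm, hT⟩, ⟨hu, hu'⟩, fun h => hw' h.2⟩
  · rintro ⟨u, w, ⟨huw, hT⟩, ⟨hu, hu'⟩, hw'⟩
    exact ⟨u, w, hu, huw ▸ hu, hT, hu', fun h => hw' ⟨huw ▸ hu, h⟩⟩

/-- Lemma `lem:inv-inductive-inv`: there is an NFA over `Γ` with at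
most `n_T · n_V²` states recognizing the complement of `Inductive(V)`, i.e. the
set of representations `W` for which some transition `u ⇝ w` has `u ⊨_V W` but
not `w ⊨_V W`. -/
theorem nfa_for_nonInductive_reps
    {Sig Gam QI QT QV : Type} [Fintype Sig] [Fintype Gam]
    [Fintype QI] [Fintype QT] [Fintype QV]
    (R : RTS Sig QI QT) (V : DFA (Sig × Gam) QV) :
    ∃ (Q : Type) (_ : Fintype Q) (B : NFA Gam Q),
      Fintype.card Q ≤ Fintype.card QT * Fintype.card QV ^ 2 ∧
      ∀ W : List Gam,
        W ∈ B.accepts ↔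
          ∃ u w : List Sig, R.Step u w ∧ Models V u W ∧ ¬ Models V w W :=
  nfa_for_nonInductive_reps_general R V
end

section
/- Let R = (Σ, I, T) be a regular transition system and let V be a deterministic interpreter over Σ×Γ. Then the set Ind_V(R) of configurations that are potentially reachable with respect to V from some initial configuration is a regular language over Σ (it is recognized by some NFA). -/
namespace IndVAux
open Set

variable {A B C : Type} {σ σ' : Type}

/-- Relabel an NFA along a map on alphabets. -/
def relabel (M : NFA A σ) (f : C → A) : NFA C σ where
  step q c := M.step q (f c)
  start := M.start
  accept := M.accept

theorem relabel_evalFrom (M : NFA A σ) (f : C → A) (S : Set σ) (x : List C) :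
    (relabel M f).evalFrom S x = M.evalFrom S (x.map f) := by
  simp only [NFA.evalFrom, List.foldl_map]
  rfl

theorem relabel_accepts (M : NFA A σ) (f : C → A) (x : List C) :
    x ∈ (relabel M f).accepts ↔ x.map f ∈ M.accepts := by
  rw [NFA.mem_accepts, NFA.mem_accepts, relabel_evalFrom]
  rfl

/-- Synchronous product (intersection) of two NFAs. -/
def inter (M : NFA A σ) (N : NFA A σ') : NFA A (σ × σ') where
  step q a := M.step q.1 a ×ˢ N.step q.2 a
  start := M.start ×ˢ N.start
  accept := M.accept ×ˢ N.accept

theorem inter_stepSet (M : NFA A σ) (N : NFA A σ') (S : Set σ) (S' : Set σ') (a : A) :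
    (inter M N).stepSet (S ×ˢ S') a = M.stepSet S a ×ˢ N.stepSet S' a := by
  ext ⟨p, q⟩
  simp only [NFA.stepSet, inter, Set.mem_iUnion, Set.mem_prod]
  constructor
  · rintro ⟨⟨r, r'⟩, ⟨hr, hr'⟩, hp, hq⟩
    exact ⟨⟨r, hr, hp⟩, ⟨r', hr', hq⟩⟩
  · rintro ⟨⟨r, hr, hp⟩, ⟨r', hr', hq⟩⟩
    exact ⟨⟨r, r'⟩, ⟨hr, hr'⟩, hp, hq⟩

theorem inter_evalFrom (M : NFA A σ) (N : NFA A σ') (S : Set σ) (S' : Set σ') (x : List A) :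
    (inter M N).evalFrom (S ×ˢ S') x = M.evalFrom S x ×ˢ N.evalFrom S' x := by
  induction x generalizing S S' with
  | nil => rfl
  | cons a x ih =>
    show (inter M N).evalFrom ((inter M N).stepSet (S ×ˢ S') a) x = _
    rw [inter_stepSet, ih]
    rfl

theorem inter_accepts (M : NFA A σ) (N : NFA A σ') (x : List A) :
    x ∈ (inter M N).accepts ↔ x ∈ M.accepts ∧ x ∈ N.accepts := by
  rw [NFA.mem_accepts, NFA.mem_accepts, NFA.mem_accepts]
  show (∃ S ∈ (M.accept ×ˢ N.accept), S ∈ (inter M N).evalFrom (M.start ×ˢ N.start) x) ↔ _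
  rw [inter_evalFrom]
  constructor
  · rintro ⟨⟨p, q⟩, ⟨hp, hq⟩, hp', hq'⟩
    exact ⟨⟨p, hp, hp'⟩, ⟨q, hq, hq'⟩⟩
  · rintro ⟨⟨p, hp, hp'⟩, ⟨q, hq, hq'⟩⟩
    exact ⟨⟨p, q⟩, ⟨hp, hq⟩, hp', hq'⟩

theorem stepSet_iUnion {ι : Type*} (M : NFA A σ) (S : ι → Set σ) (a : A) :
    M.stepSet (⋃ i, S i) a = ⋃ i, M.stepSet (S i) a := by
  simp only [NFA.stepSet, Set.biUnion_iUnion]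

theorem evalFrom_iUnion {ι : Type*} (M : NFA A σ) (S : ι → Set σ) (x : List A) :
    M.evalFrom (⋃ i, S i) x = ⋃ i, M.evalFrom (S i) x := by
  induction x generalizing S with
  | nil => rfl
  | cons a x ih =>
    show M.evalFrom (M.stepSet (⋃ i, S i) a) x = _
    rw [stepSet_iUnion, ih]
    rfl

/-- Project away the second alphabet component, guessing it nondeterministically. -/
def proj (M : NFA (A × B) σ) : NFA A σ where
  step q a := ⋃ b, M.step q (a, b)
  start := M.start
  accept := M.accept

theorem proj_stepSet (M : NFA (A × B) σ) (S : Set σ) (a : A) :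
    (proj M).stepSet S a = ⋃ b, M.stepSet S (a, b) := by
  ext q
  simp only [NFA.stepSet, proj, Set.mem_iUnion]
  tauto

theorem proj_evalFrom (M : NFA (A × B) σ) (S : Set σ) (x : List A) (q : σ) :
    q ∈ (proj M).evalFrom S x ↔
      ∃ y : List B, y.length = x.length ∧ q ∈ M.evalFrom S (x.zip y) := by
  induction x generalizing S with
  | nil =>
    constructor
    · intro h; exact ⟨[], rfl, h⟩
    · rintro ⟨y, -, h⟩; exact h
  | cons a x ih =>
    show q ∈ (proj M).evalFrom ((proj M).stepSet S a) x ↔ _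
    rw [ih, proj_stepSet]
    constructor
    · rintro ⟨y, hlen, hq⟩
      rw [evalFrom_iUnion] at hq
      rcases Set.mem_iUnion.1 hq with ⟨b, hq⟩
      exact ⟨b :: y, by simp [hlen], hq⟩
    · rintro ⟨y, hlen, hq⟩
      rcases y with _ | ⟨b, y⟩
      · simp at hlen
      · refine ⟨y, by simpa using hlen, ?_⟩
        rw [evalFrom_iUnion]
        exact Set.mem_iUnion.2 ⟨b, hq⟩

theorem proj_accepts (M : NFA (A × B) σ) (x : List A) :
    x ∈ (proj M).accepts ↔
      ∃ y : List B, y.length = x.length ∧ x.zip y ∈ M.accepts := by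
  rw [NFA.mem_accepts]
  show (∃ q ∈ M.accept, q ∈ (proj M).evalFrom M.start x) ↔ _
  constructor
  · rintro ⟨q, hq, h⟩
    rcases (proj_evalFrom M M.start x q).1 h with ⟨y, hlen, h⟩
    exact ⟨y, hlen, M.mem_accepts.2 ⟨q, hq, h⟩⟩
  · rintro ⟨y, hlen, h⟩
    rcases M.mem_accepts.1 h with ⟨q, hq, h⟩
    exact ⟨q, hq, (proj_evalFrom M M.start x q).2 ⟨y, hlen, h⟩⟩

/-- Complement of a DFA. -/
def dcompl (M : DFA A σ) : DFA A σ where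
  step := M.step
  start := M.start
  accept := M.acceptᶜ

theorem dcompl_accepts (M : DFA A σ) (x : List A) :
    x ∈ (dcompl M).accepts ↔ x ∉ M.accepts := Iff.rfl


variable {A B C : Type}

theorem zip_fst_snd : ∀ (y : List (A × B)), (y.map Prod.fst).zip (y.map Prod.snd) = y
  | [] => rfl
  | (a, b) :: y => by simp [zip_fst_snd y]

theorem zip_zip_map_fst : ∀ (x : List A) (y : List B) (z : List C),
    x.length = y.length → y.length = z.length →
    ((x.zip (y.zip z)).map fun c => (c.2.1, c.1)) = y.zip x
  | [], [], [], _, _ => rfl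
  | a :: x, b :: y, c :: z, h1, h2 => by
    simp only [List.zip_cons_cons, List.map_cons]
    rw [zip_zip_map_fst x y z (by simpa using h1) (by simpa using h2)]
  | [], b :: y, _, h1, _ => by simp at h1
  | a :: x, [], _, h1, _ => by simp at h1
  | a :: x, b :: y, [], _, h2 => by simp at h2

theorem zip_zip_map_snd : ∀ (x : List A) (y : List B) (z : List C),
    x.length = y.length → y.length = z.length →
    ((x.zip (y.zip z)).map fun c => (c.2.2, c.1)) = z.zip x
  | [], [], [], _, _ => rfl
  | a :: x, b :: y, c :: z, h1, h2 => by
    simp only [List.zip_cons_cons, List.map_cons]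
    rw [zip_zip_map_snd x y z (by simpa using h1) (by simpa using h2)]
  | [], b :: y, _, h1, _ => by simp at h1
  | a :: x, [], _, h1, _ => by simp at h1
  | a :: x, b :: y, [], _, h2 => by simp at h2

theorem zip_zip_map_fst' : ∀ (x : List A) (y : List B) (z : List C),
    x.length = y.length → y.length = z.length →
    (((x.zip y).zip z).map fun c => (c.1.1, c.2)) = x.zip z
  | [], [], [], _, _ => rfl
  | a :: x, b :: y, c :: z, h1, h2 => by
    simp only [List.zip_cons_cons, List.map_cons]
    rw [zip_zip_map_fst' x y z (by simpa using h1) (by simpa using h2)]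
  | [], b :: y, _, h1, _ => by simp at h1
  | a :: x, [], _, h1, _ => by simp at h1
  | a :: x, b :: y, [], _, h2 => by simp at h2

theorem zip_zip_map_snd' : ∀ (x : List A) (y : List B) (z : List C),
    x.length = y.length → y.length = z.length →
    (((x.zip y).zip z).map fun c => (c.1.2, c.2)) = y.zip z
  | [], [], [], _, _ => rfl
  | a :: x, b :: y, c :: z, h1, h2 => by
    simp only [List.zip_cons_cons, List.map_cons]
    rw [zip_zip_map_snd' x y z (by simpa using h1) (by simpa using h2)]
  | [], b :: y, _, h1, _ => by simp at h1
  | a :: x, [], _, h1, _ => by simp at h1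
  | a :: x, b :: y, [], _, h2 => by simp at h2

theorem map_snd_zip_eq : ∀ (x : List A) (y : List B), x.length = y.length →
    (x.zip y).map Prod.snd = y
  | [], [], _ => rfl
  | a :: x, b :: y, h => by simp [map_snd_zip_eq x y (by simpa using h)]
  | [], b :: y, h => by simp at h
  | a :: x, [], h => by simp at h

end IndVAux




namespace IndVAux

variable {Sig Gam QI QT QV : Type}

/-- NFA over `Gam` recognizing the NON-inductive representations. -/
def Nni (R : RTS Sig QI QT) (V : DFA (Sig × Gam) QV) :
    NFA Gam (QT × (QV × QV)) :=
  proj (inter (relabel R.T (fun c : Gam × (Sig × Sig) => c.2))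
    (inter (relabel V.toNFA (fun c : Gam × (Sig × Sig) => (c.2.1, c.1)))
           (relabel (dcompl V).toNFA (fun c : Gam × (Sig × Sig) => (c.2.2, c.1)))))

theorem mem_Nni (R : RTS Sig QI QT) (V : DFA (Sig × Gam) QV) (W : List Gam) :
    W ∈ (Nni R V).accepts ↔
      ∃ u w : List Sig, R.Step u w ∧ Models V u W ∧ ¬ Models V w W := by
  rw [Nni, proj_accepts]
  constructor
  · rintro ⟨y, hlen, hy⟩
    rw [inter_accepts, inter_accepts, relabel_accepts, relabel_accepts,
      relabel_accepts, DFA.toNFA_correct, DFA.toNFA_correct] at hy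
    obtain ⟨hT, hV, hVc⟩ := hy
    set u := y.map Prod.fst with hu
    set w := y.map Prod.snd with hw
    have hyuw : y = u.zip w := (zip_fst_snd y).symm
    have hul : u.length = W.length := by simp [hu, hlen]
    have hwl : w.length = W.length := by simp [hw, hlen]
    have huw : u.length = w.length := hul.trans hwl.symm
    have h1 : (W.zip y).map Prod.snd = y :=
      map_snd_zip_eq W y hlen.symm
    have h2 : ((W.zip (u.zip w)).map fun c => (c.2.1, c.1)) = u.zip W :=
      zip_zip_map_fst W u w hul.symm huw
    have h3 : ((W.zip (u.zip w)).map fun c => (c.2.2, c.1)) = w.zip W :=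
      zip_zip_map_snd W u w hul.symm huw
    rw [hyuw] at h1
    refine ⟨u, w, ⟨huw, ?_⟩, ⟨hul, ?_⟩, ?_⟩
    · rw [hyuw, h1] at hT; exact hT
    · rw [hyuw, h2] at hV; exact hV
    · rw [hyuw, h3] at hVc
      rintro ⟨-, hmem⟩
      exact (dcompl_accepts V (w.zip W)).1 hVc hmem
  · rintro ⟨u, w, ⟨huw, hT⟩, ⟨hul, hV⟩, hnM⟩
    have hwl : w.length = W.length := huw ▸ hul
    refine ⟨u.zip w, ?_, ?_⟩
    · rw [List.length_zip, huw, min_self, hwl]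
    · rw [inter_accepts, inter_accepts, relabel_accepts, relabel_accepts,
        relabel_accepts, DFA.toNFA_correct, DFA.toNFA_correct]
      have h1 : (W.zip (u.zip w)).map Prod.snd = u.zip w := by
        apply map_snd_zip_eq
        rw [List.length_zip, huw, min_self, hwl]
      have h2 : ((W.zip (u.zip w)).map fun c => (c.2.1, c.1)) = u.zip W :=
        zip_zip_map_fst W u w hul.symm huw
      have h3 : ((W.zip (u.zip w)).map fun c => (c.2.2, c.1)) = w.zip W :=
        zip_zip_map_snd W u w hul.symm huw
      refine ⟨?_, ?_, ?_⟩
      · rw [h1]; exact hT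
      · rw [h2]; exact hV
      · rw [h3]
        exact (dcompl_accepts V (w.zip W)).2 (fun hmem => hnM ⟨hwl, hmem⟩)

theorem inductive_iff (R : RTS Sig QI QT) (V : DFA (Sig × Gam) QV) (W : List Gam) :
    InductiveRep R V W ↔ W ∉ (Nni R V).accepts := by
  rw [mem_Nni]
  constructor
  · rintro h ⟨u, w, hs, hu, hw⟩
    exact hw (h u w hs hu)
  · intro h u w hs hu
    by_contra hw
    exact h ⟨u, w, hs, hu, hw⟩

/-- NFA over `Sig × Sig` recognizing pairs `(u,w)` such that some inductive `W`
is satisfied by `u` but not by `w`. -/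
def M2 (R : RTS Sig QI QT) (V : DFA (Sig × Gam) QV) :
    NFA (Sig × Sig) (Set (QT × (QV × QV)) × (QV × QV)) :=
  proj (inter (relabel (dcompl (Nni R V).toDFA).toNFA
        (fun c : (Sig × Sig) × Gam => c.2))
    (inter (relabel V.toNFA (fun c : (Sig × Sig) × Gam => (c.1.1, c.2)))
           (relabel (dcompl V).toNFA (fun c : (Sig × Sig) × Gam => (c.1.2, c.2)))))

theorem mem_M2 (R : RTS Sig QI QT) (V : DFA (Sig × Gam) QV) (u w : List Sig)
    (hlen : u.length = w.length) :
    u.zip w ∈ (M2 R V).accepts ↔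
      ∃ W : List Gam, InductiveRep R V W ∧ Models V u W ∧ ¬ Models V w W := by
  have hzl : (u.zip w).length = u.length := by
    rw [List.length_zip, hlen, min_self]
  rw [M2, proj_accepts]
  constructor
  · rintro ⟨W, hWlen, hy⟩
    rw [hzl] at hWlen
    rw [inter_accepts, inter_accepts, relabel_accepts, relabel_accepts,
      relabel_accepts, DFA.toNFA_correct, DFA.toNFA_correct,
      DFA.toNFA_correct] at hy
    obtain ⟨hD, hV, hVc⟩ := hy
    have h1 : ((u.zip w).zip W).map Prod.snd = W :=
      map_snd_zip_eq _ _ (by rw [hzl, hWlen])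
    have h2 : (((u.zip w).zip W).map fun c => (c.1.1, c.2)) = u.zip W :=
      zip_zip_map_fst' u w W hlen (hlen ▸ hWlen.symm)
    have h3 : (((u.zip w).zip W).map fun c => (c.1.2, c.2)) = w.zip W :=
      zip_zip_map_snd' u w W hlen (hlen ▸ hWlen.symm)
    rw [h1] at hD; rw [h2] at hV; rw [h3] at hVc
    rw [dcompl_accepts, NFA.toDFA_correct] at hD
    refine ⟨W, (inductive_iff R V W).2 hD, ⟨hWlen.symm, hV⟩, ?_⟩
    rintro ⟨-, hmem⟩
    exact (dcompl_accepts V (w.zip W)).1 hVc hmem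
  · rintro ⟨W, hInd, ⟨hul, hV⟩, hnM⟩
    have hwl : w.length = W.length := hlen ▸ hul
    refine ⟨W, by rw [hzl, hul], ?_⟩
    rw [inter_accepts, inter_accepts, relabel_accepts, relabel_accepts,
      relabel_accepts, DFA.toNFA_correct, DFA.toNFA_correct, DFA.toNFA_correct]
    have h1 : ((u.zip w).zip W).map Prod.snd = W :=
      map_snd_zip_eq _ _ (by rw [hzl, hul])
    have h2 : (((u.zip w).zip W).map fun c => (c.1.1, c.2)) = u.zip W :=
      zip_zip_map_fst' u w W hlen hwl
    have h3 : (((u.zip w).zip W).map fun c => (c.1.2, c.2)) = w.zip W :=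
      zip_zip_map_snd' u w W hlen hwl
    refine ⟨?_, ?_, ?_⟩
    · rw [h1, dcompl_accepts, NFA.toDFA_correct]
      exact (inductive_iff R V W).1 hInd
    · rw [h2]; exact hV
    · rw [h3]
      exact (dcompl_accepts V (w.zip W)).2 (fun hmem => hnM ⟨hwl, hmem⟩)

/-- The final NFA over `Sig` (for the main case). -/
def L1 (R : RTS Sig QI QT) (V : DFA (Sig × Gam) QV) :
    NFA Sig (QI × Set (Set (QT × (QV × QV)) × (QV × QV))) :=
  proj (inter (relabel R.I (fun c : Sig × Sig => c.2))
    (relabel (dcompl (M2 R V).toDFA).toNFA (Prod.swap : Sig × Sig → Sig × Sig)))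

theorem mem_L1 (R : RTS Sig QI QT) (V : DFA (Sig × Gam) QV) (w : List Sig) :
    w ∈ (L1 R V).accepts ↔
      ∃ u : List Sig, u.length = w.length ∧ u ∈ R.I.accepts ∧
        u.zip w ∉ (M2 R V).accepts := by
  rw [L1, proj_accepts]
  constructor
  · rintro ⟨u, hlen, hy⟩
    rw [inter_accepts, relabel_accepts, relabel_accepts, DFA.toNFA_correct] at hy
    obtain ⟨hI, hD⟩ := hy
    have h1 : (w.zip u).map Prod.snd = u := map_snd_zip_eq _ _ hlen.symm
    have h2 : (w.zip u).map Prod.swap = u.zip w := List.zip_swap w u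
    rw [h1] at hI; rw [h2, dcompl_accepts, NFA.toDFA_correct] at hD
    exact ⟨u, hlen, hI, hD⟩
  · rintro ⟨u, hlen, hI, hD⟩
    refine ⟨u, hlen, ?_⟩
    rw [inter_accepts, relabel_accepts, relabel_accepts, DFA.toNFA_correct]
    have h1 : (w.zip u).map Prod.snd = u := map_snd_zip_eq _ _ hlen.symm
    have h2 : (w.zip u).map Prod.swap = u.zip w := List.zip_swap w u
    rw [h1, h2, dcompl_accepts, NFA.toDFA_correct]
    exact ⟨hI, hD⟩

/-- One-state NFA accepting everything. -/
def univNFA (A : Type) : NFA A Unit :=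
  ⟨fun _ _ => Set.univ, Set.univ, Set.univ⟩

theorem univNFA_accepts (A : Type) : (univNFA A).accepts = Set.univ := by
  have key : ∀ (x : List A) (S : Set Unit), () ∈ S → () ∈ (univNFA A).evalFrom S x := by
    intro x
    induction x with
    | nil => intro S hS; exact hS
    | cons a x ih =>
      intro S hS
      apply ih
      exact Set.mem_iUnion.2 ⟨(), Set.mem_iUnion.2 ⟨hS, Set.mem_univ ()⟩⟩
  ext x
  refine ⟨fun _ => trivial, fun _ => ?_⟩
  exact (univNFA A).mem_accepts.2 ⟨(), Set.mem_univ (), key x _ (Set.mem_univ ())⟩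

end IndVAux


open IndVAux in
/-- For every RTS `R` and deterministic interpreter `V`, the set
`Ind_V(R)` is a regular language over `Σ`: it is recognized by some NFA with a
finite state type. -/
theorem IndV_regular
    {Sig Gam QI QT QV : Type} [Fintype Sig] [Fintype Gam]
    [Fintype QI] [Fintype QT] [Fintype QV]
    (R : RTS Sig QI QT) (V : DFA (Sig × Gam) QV) :
    ∃ (Q : Type) (_ : Fintype Q) (A : NFA Sig Q),
      A.accepts = IndV R V := by
  by_cases hc : ∃ u ∈ R.I.accepts, ∀ W : List Gam, InductiveRep R V W → ¬ Models V u W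
  · -- some initial configuration satisfies no inductive representation: IndV = univ
    obtain ⟨u, hI, hu⟩ := hc
    refine ⟨Unit, inferInstance, univNFA Sig, ?_⟩
    rw [univNFA_accepts]
    ext w
    exact ⟨fun _ => ⟨u, hI, fun W hInd hM => absurd hM (hu W hInd)⟩, fun _ => trivial⟩
  · push_neg at hc
    refine ⟨_, inferInstance, L1 R V, ?_⟩
    ext w
    rw [mem_L1]
    constructor
    · rintro ⟨u, hlen, hI, hM2⟩
      refine ⟨u, hI, fun W hInd hMu => ?_⟩
      have hwW : w.length = W.length := hlen ▸ hMu.1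
      refine ⟨hwW, ?_⟩
      by_contra hmem
      exact hM2 ((mem_M2 R V u w hlen).2 ⟨W, hInd, hMu, fun h => hmem h.2⟩)
    · rintro ⟨u, hI, hPR⟩
      obtain ⟨W0, hInd0, hM0⟩ := hc u hI
      have hMw0 : Models V w W0 := hPR W0 hInd0 hM0
      have hlen : u.length = w.length := hM0.1.trans hMw0.1.symm
      refine ⟨u, hlen, hI, fun hmem => ?_⟩
      obtain ⟨W, hInd, hMu, hnMw⟩ := (mem_M2 R V u w hlen).1 hmem
      exact hnMw (hPR W hInd hMu)
end

section
/- Let R = (Σ, I, T) be a regular transition system. For every b ≥ 1, the set Ind_b(R) is a regular language over Σ (it is recognized by some deterministic finite automaton). -/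
/-!
Put a pair of configurations and a `b`-formula of the same length on the tracks of one word over
`(Σ × Σ) × (Fin b → Set Σ)`. A DFA that remembers which clauses it has already met decides
whether one track satisfies the formula track, so "φ holds on `u` but not on `w`" is regular.
A formula is inductive iff no transducer-accepted pair `(w, u)` is separated by it in this way,
so the inductive formulas form the complement of a projection of a regular language. Likewise
`u ⇝_b w` fails iff some inductive formula separates `u` from `w`, and `Ind_b(R)` is the
projection onto the second track of `(I × Σ*) ∩ ⇝_b`; for `b ≥ 1` the relation `⇝_b` only
relates words of equal length, which is what lets a pair be written on two tracks. Regular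
languages are closed under Boolean operations and under images and preimages by letterwise maps.
-/

theorem List.exists_map_fst_eq_and_map_snd_eq {α β : Type*} {x : List α} {y : List β}
    (h : x.length = y.length) : ∃ z : List (α × β), z.map Prod.fst = x ∧ z.map Prod.snd = y :=
  ⟨x.zip y, List.map_fst_zip h.le, List.map_snd_zip h.ge⟩

theorem Language.mem_map {α β : Type*} {f : α → β} {L : Language α} {y : List β} :
    y ∈ Language.map f L ↔ ∃ x ∈ L, x.map f = y :=
  Iff.rfl

namespace NFA

variable {α β σ : Type*}

def map (f : α → β) (M : NFA α σ) : NFA β σ where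
  step q b := {q' | ∃ a, f a = b ∧ q' ∈ M.step q a}
  start := M.start
  accept := M.accept

theorem stepSet_map (f : α → β) (M : NFA α σ) (S : Set σ) (b : β) :
    (M.map f).stepSet S b = ⋃ (a) (_ : f a = b), M.stepSet S a := by
  ext q
  simp only [mem_stepSet, map, Set.mem_ofPred_eq, Set.mem_iUnion]
  tauto

theorem mem_evalFrom_map {f : α → β} {M : NFA α σ} {S : Set σ} {y : List β} {q : σ} :
    q ∈ (M.map f).evalFrom S y ↔ ∃ x : List α, x.map f = y ∧ q ∈ M.evalFrom S x := by
  induction y generalizing S with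
  | nil => simp [List.map_eq_nil_iff]
  | cons b y ih =>
    simp only [evalFrom_cons, ih, stepSet_map, evalFrom_iUnion₂, Set.mem_iUnion,
      List.map_eq_cons_iff]
    constructor
    · rintro ⟨a, ha, x, hx, hq⟩
      exact ⟨a :: x, ⟨a, x, rfl, ha, hx⟩, hq⟩
    · rintro ⟨_, ⟨a, x, rfl, ha, hx⟩, hq⟩
      exact ⟨a, ha, x, hx, hq⟩

theorem accepts_map (f : α → β) (M : NFA α σ) :
    (M.map f).accepts = Language.map f M.accepts := by
  ext y
  simp only [mem_accepts, Language.mem_map]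
  constructor
  · rintro ⟨q, hq, hev⟩
    obtain ⟨x, rfl, hx⟩ := mem_evalFrom_map.mp hev
    exact ⟨x, ⟨q, hq, hx⟩, rfl⟩
  · rintro ⟨x, ⟨q, hq, hx⟩, rfl⟩
    exact ⟨q, hq, mem_evalFrom_map.mpr ⟨x, rfl, hx⟩⟩

theorem isRegular_accepts {σ : Type} [Fintype σ] (M : NFA α σ) : M.accepts.IsRegular :=
  ⟨Set σ, inferInstance, M.toDFA, M.toDFA_correct⟩

end NFA

namespace Language

variable {α β : Type*}

theorem IsRegular.preimage_map {L : Language β} (h : L.IsRegular) (f : α → β) :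
    IsRegular ({x | x.map f ∈ L} : Language α) := by
  obtain ⟨σ, _, M, rfl⟩ := h
  exact ⟨σ, inferInstance, M.comap f, M.accepts_comap f⟩

theorem IsRegular.map {L : Language α} (h : L.IsRegular) (f : α → β) :
    (Language.map f L).IsRegular := by
  obtain ⟨σ, _, M, rfl⟩ := h
  rw [← M.toNFA_correct, ← NFA.accepts_map]
  exact NFA.isRegular_accepts _

theorem isRegular_setOf_forall_exists_mem {ι : Type} [Fintype ι] (P : ι → α → Prop) :
    IsRegular ({x | ∀ i, ∃ a ∈ x, P i a} : Language α) := by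
  classical
  let M : DFA α (Set ι) := ⟨fun S a => S ∪ {i | P i a}, ∅, {Set.univ}⟩
  have hM : ∀ S x, M.evalFrom S x = S ∪ {i | ∃ a ∈ x, P i a} := by
    intro S x
    induction x generalizing S with
    | nil => simp
    | cons a x ih =>
      ext i
      simp only [DFA.evalFrom_cons, ih, M, Set.mem_union, Set.mem_ofPred_eq, List.mem_cons]
      grind
  refine ⟨Set ι, inferInstance, M, ?_⟩
  ext x
  rw [DFA.mem_accepts, DFA.eval, hM]
  simp only [M, Set.empty_union, Set.mem_singleton_iff, Set.eq_univ_iff_forall]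
  rfl

end Language

section BSat

variable {Sig : Type} {b : ℕ}

theorem bsat_map_iff {A : Type*} (z : List A) (f : A → Sig) (g : A → (Fin b → Set Sig)) :
    BSat (z.map f) (z.map g) ↔ ∀ i, ∃ a ∈ z, f a ∈ g a i := by
  simp only [BSat, List.length_map, ne_eq, not_true_eq_false, false_or, List.get_eq_getElem,
    List.getElem_map, List.mem_iff_getElem]
  refine forall_congr' fun i => ⟨?_, ?_⟩
  · rintro ⟨j, hj, _, hm⟩
    exact ⟨_, ⟨j, hj, rfl⟩, hm⟩
  · rintro ⟨_, ⟨j, hj, rfl⟩, hm⟩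
    exact ⟨j, hj, hj, hm⟩

theorem length_eq_of_not_bsat {w : List Sig} {φ : BFormula Sig b} (h : ¬ BSat w φ) :
    w.length = φ.length :=
  not_not.mp fun hne => h (Or.inl hne)

theorem isRegular_setOf_bsat_map {A : Type*} (f : A → Sig) (g : A → (Fin b → Set Sig)) :
    Language.IsRegular ({z | BSat (z.map f) (z.map g)} : Language A) := by
  simp only [bsat_map_iff]
  exact Language.isRegular_setOf_forall_exists_mem fun i a => f a ∈ g a i

end BSat

section Separating

variable {Sig : Type} {b : ℕ}

/-- A word over `(Σ × Σ) × (Fin b → Set Σ)` carries two configurations and a `b`-formula, all of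
the same length, on three tracks. -/
def Separating (Sig : Type) (b : ℕ) : Language ((Sig × Sig) × (Fin b → Set Sig)) :=
  {z | BSat (z.map (·.1.1)) (z.map Prod.snd) ∧ ¬ BSat (z.map (·.1.2)) (z.map Prod.snd)}

theorem isRegular_separating : (Separating Sig b).IsRegular :=
  (isRegular_setOf_bsat_map _ _).inf (isRegular_setOf_bsat_map _ _).compl

theorem exists_separating_iff (p : List (Sig × Sig)) (φ : BFormula Sig b) :
    (∃ z ∈ Separating Sig b, z.map Prod.fst = p ∧ z.map Prod.snd = φ) ↔
      BSat (p.map Prod.fst) φ ∧ ¬ BSat (p.map Prod.snd) φ := by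
  constructor
  · rintro ⟨z, ⟨hfst, hsnd⟩, rfl, rfl⟩
    simp only [List.map_map]
    exact ⟨hfst, hsnd⟩
  · rintro ⟨hfst, hsnd⟩
    have hlen : p.length = φ.length := by simpa using length_eq_of_not_bsat hsnd
    obtain ⟨z, rfl, rfl⟩ := List.exists_map_fst_eq_and_map_snd_eq hlen
    simp only [List.map_map] at hfst hsnd
    exact ⟨z, ⟨hfst, hsnd⟩, rfl, rfl⟩

end Separating

namespace RTS

variable {Sig QI QT : Type} (R : RTS Sig QI QT) {b : ℕ}

theorem step_map_fst_map_snd (p : List (Sig × Sig)) :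
    R.Step (p.map Prod.fst) (p.map Prod.snd) ↔ p ∈ R.T.accepts := by
  simp [RTS.Step, List.zip_map']

theorem not_isInductiveBFormula_iff (φ : BFormula Sig b) :
    ¬ IsInductiveBFormula R φ ↔
      ∃ p ∈ R.T.accepts, BSat (p.map Prod.fst) φ ∧ ¬ BSat (p.map Prod.snd) φ := by
  simp only [IsInductiveBFormula, not_forall]
  constructor
  · rintro ⟨w, u, hw, hstep, hu⟩
    obtain ⟨p, rfl, rfl⟩ := List.exists_map_fst_eq_and_map_snd_eq hstep.1
    exact ⟨p, (R.step_map_fst_map_snd p).mp hstep, hw, hu⟩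
  · rintro ⟨p, hp, hw, hu⟩
    exact ⟨_, _, hw, (R.step_map_fst_map_snd p).mpr hp, hu⟩

theorem isInductiveBFormula_iff (φ : BFormula Sig b) :
    IsInductiveBFormula R φ ↔
      φ ∉ Language.map Prod.snd (Separating Sig b ⊓ {z | z.map Prod.fst ∈ R.T.accepts}) := by
  rw [Language.mem_map, ← not_iff_not, not_not, not_isInductiveBFormula_iff]
  constructor
  · rintro ⟨p, hp, hsep⟩
    obtain ⟨z, hz, rfl, rfl⟩ := (exists_separating_iff p φ).mpr hsep
    exact ⟨z, Language.mem_inf.mpr ⟨hz, hp⟩, rfl⟩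
  · rintro ⟨z, hz, rfl⟩
    obtain ⟨hsep, hp⟩ := Language.mem_inf.mp hz
    exact ⟨_, hp, (exists_separating_iff _ _).mp ⟨z, hsep, rfl, rfl⟩⟩

theorem bPotReach_iff (p : List (Sig × Sig)) :
    BPotReach b R (p.map Prod.fst) (p.map Prod.snd) ↔
      p ∉ Language.map Prod.fst
        (Separating Sig b ⊓ {z | IsInductiveBFormula R (z.map Prod.snd)}) := by
  rw [Language.mem_map, ← not_iff_not, not_not]
  simp only [BPotReach, not_forall, exists_prop]
  constructor
  · rintro ⟨φ, hφ, hsep⟩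
    obtain ⟨z, hz, rfl, rfl⟩ := (exists_separating_iff p φ).mpr hsep
    exact ⟨z, Language.mem_inf.mpr ⟨hz, hφ⟩, rfl⟩
  · rintro ⟨z, hz, rfl⟩
    obtain ⟨hsep, hφ⟩ := Language.mem_inf.mp hz
    exact ⟨_, hφ, (exists_separating_iff _ _).mp ⟨z, hsep, rfl, rfl⟩⟩

theorem isRegular_setOf_isInductiveBFormula [Fintype QT] :
    Language.IsRegular ({φ | IsInductiveBFormula R φ} : Language (Fin b → Set Sig)) := by
  rw [show ({φ | IsInductiveBFormula R φ} : Language (Fin b → Set Sig)) = _ from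
    Set.ext R.isInductiveBFormula_iff]
  exact ((isRegular_separating.inf (R.T.isRegular_accepts.preimage_map _)).map _).compl

theorem isRegular_setOf_bPotReach [Fintype QT] :
    Language.IsRegular
      ({p | BPotReach b R (p.map Prod.fst) (p.map Prod.snd)} : Language (Sig × Sig)) := by
  rw [show ({p | BPotReach b R (p.map Prod.fst) (p.map Prod.snd)} : Language (Sig × Sig)) = _ from
    Set.ext R.bPotReach_iff]
  exact ((isRegular_separating.inf
    (R.isRegular_setOf_isInductiveBFormula.preimage_map _)).map _).compl

/-- The formula of length `|w|` whose clauses are all empty holds exactly on the words of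
another length, and it is inductive because steps preserve length. -/
theorem length_eq_of_bPotReach (hb : 1 ≤ b) {u w : List Sig} (h : BPotReach b R u w) :
    u.length = w.length := by
  let φ : BFormula Sig b := List.replicate w.length fun _ => ∅
  have hsat : ∀ x : List Sig, BSat x φ ↔ x.length ≠ w.length := by
    intro x
    simp only [BSat, φ, List.length_replicate, List.get_eq_getElem, List.getElem_replicate,
      Set.mem_empty_iff_false, exists_false, or_iff_left_iff_imp]
    exact fun h => (h ⟨0, hb⟩).elim
  have hind : IsInductiveBFormula R φ := by
    intro x y hx hstep
    rw [hsat] at hx ⊢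
    rwa [← hstep.1]
  by_contra hne
  exact (hsat w).mp (h φ hind ((hsat u).mpr hne)) rfl

theorem ind_eq_map (hb : 1 ≤ b) :
    Ind b R = Language.map Prod.snd ({p | p.map Prod.fst ∈ R.I.accepts} ⊓
      {p | BPotReach b R (p.map Prod.fst) (p.map Prod.snd)}) := by
  ext w
  constructor
  · rintro ⟨u, hu, hpot⟩
    obtain ⟨p, rfl, rfl⟩ :=
      List.exists_map_fst_eq_and_map_snd_eq (R.length_eq_of_bPotReach hb hpot)
    exact ⟨p, Language.mem_inf.mpr ⟨hu, hpot⟩, rfl⟩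
  · rintro ⟨p, hp, rfl⟩
    obtain ⟨hu, hpot⟩ := Language.mem_inf.mp hp
    exact ⟨_, hu, hpot⟩

end RTS

theorem Ind_regular_general
    {Sig QI QT : Type} [Fintype QI] [Fintype QT]
    (R : RTS Sig QI QT) (b : ℕ) (hb : 1 ≤ b) :
    ∃ (Q : Type) (_ : Fintype Q) (A : DFA Sig Q),
      A.accepts = Ind b R := by
  rw [R.ind_eq_map hb]
  exact ((R.I.isRegular_accepts.preimage_map Prod.fst).inf R.isRegular_setOf_bPotReach).map _

/-- For every RTS `R` and every `b ≥ 1`, the set `Ind_b(R)` is a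
regular language over `Σ`: it is recognized by some DFA with a finite state
type. -/
theorem Ind_regular
    {Sig QI QT : Type} [Fintype Sig] [Fintype QI] [Fintype QT]
    (R : RTS Sig QI QT) (b : ℕ) (hb : 1 ≤ b) :
    ∃ (Q : Type) (_ : Fintype Q) (A : DFA Sig Q),
      A.accepts = Ind b R :=
  Ind_regular_general R b hb
end

section
/- Let R = (Σ, I, T) be a regular transition system. Every configuration w has at least one separation table, i.e., a table that is consistent with and complete for w. -/
/-- A `1`-formula (of length `φ.length`) is a word over the alphabet of subsets
of `Σ`. -/
abbrev OneFormula (Sig : Type) := List (Set Sig)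

/-- `w` satisfies `φ` iff `|w| ≠ |φ|`, or `|w| = |φ|` and there is a position `j`
with `w[j] ∈ φ[j]`. -/
def Sat1 {Sig : Type} (w : List Sig) (φ : OneFormula Sig) : Prop :=
  w.length ≠ φ.length ∨
    ∃ (j : ℕ) (h₁ : j < w.length) (h₂ : j < φ.length),
      w.get ⟨j, h₁⟩ ∈ φ.get ⟨j, h₂⟩

/-- A set `S` is `1`-bounded (a `1`-set) if for every length `ℓ` there is a
`1`-formula of length `ℓ` whose satisfying words of length `ℓ` are exactly
`S ∩ Σ^ℓ`. -/
def Is1Bounded {Sig : Type} (S : Set (List Sig)) : Prop :=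
  ∀ ℓ : ℕ, ∃ φ : OneFormula Sig, φ.length = ℓ ∧
    ∀ w : List Sig, w.length = ℓ → (w ∈ S ↔ Sat1 w φ)

/-- A `1`-formula is inductive if the set of words satisfying it is inductive. -/
def IsInductive1Formula {Sig QI QT : Type} (R : RTS Sig QI QT)
    (φ : OneFormula Sig) : Prop :=
  ∀ w u, Sat1 w φ → R.Step w u → Sat1 u φ

/-- `u ⇝_1 w`: every inductive `1`-formula satisfied by `u` is satisfied by `w`. -/
def PotReach1 {Sig QI QT : Type} (R : RTS Sig QI QT) (u w : List Sig) : Prop :=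
  ∀ φ : OneFormula Sig, IsInductive1Formula R φ → Sat1 u φ → Sat1 w φ

/-- `Ind_1(R) = { w : u ⇝_1 w for some initial u }`. -/
def Ind1 {Sig QI QT : Type} (R : RTS Sig QI QT) : Set (List Sig) :=
  { w | ∃ u ∈ R.I.accepts, PotReach1 R u w }

/-- The separator `Separator(w)`: the union of all inductive `1`-sets not containing `w`. -/
def Separator {Sig QI QT : Type} (R : RTS Sig QI QT) (w : List Sig) : Set (List Sig) :=
  { z | ∃ S : Set (List Sig), IsInductiveSet R S ∧ Is1Bounded S ∧ w ∉ S ∧ z ∈ S }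

/-- A table: a finite sequence of transitions (pairs of equal-length words in
`L(T)`). -/
abbrev Table (Sig : Type) := List (List Sig × List Sig)

/-- `Incl_{w,τ}[j]`: the letters at position `j` of `w` and of the source
configurations of the table `τ`. -/
def Incl {Sig : Type} (w : List Sig) (τ : Table Sig) (j : ℕ) : Set Sig :=
  { a | w[j]? = some a ∨ ∃ p ∈ τ, p.1[j]? = some a }

/-- `τ` is a table of length `ℓ` for `R`: all its members are transitions of `R`,
all of length `ℓ`. -/
def IsTable {Sig QI QT : Type} (R : RTS Sig QI QT) (ℓ : ℕ) (τ : Table Sig) : Prop :=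
  ∀ p ∈ τ, R.Step p.1 p.2 ∧ p.1.length = ℓ

/-- `τ` is consistent with `w`: for every row `i` and position `j`, the letter of
the `i`-th target at position `j` is the letter of `w`, or the letter of some
earlier source. -/
def Consistent {Sig : Type} (w : List Sig) (τ : Table Sig) : Prop :=
  ∀ (i : ℕ) (h : i < τ.length) (j : ℕ) (a : Sig),
    (τ.get ⟨i, h⟩).2[j]? = some a →
      w[j]? = some a ∨
        ∃ (i' : ℕ) (h' : i' < τ.length), i' < i ∧ (τ.get ⟨i', h'⟩).1[j]? = some a

/-- `τ` is complete for `w`: every one-transition extension of `τ` that remains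
consistent with `w` has all letters of its source already in `Incl_{w,τ}`. -/
def Complete {Sig QI QT : Type} (R : RTS Sig QI QT) (w : List Sig)
    (τ : Table Sig) : Prop :=
  ∀ s t : List Sig, R.Step s t → s.length = w.length →
    Consistent w (τ ++ [(s, t)]) →
    ∀ (j : ℕ) (a : Sig), s[j]? = some a → a ∈ Incl w τ j

/-- A separation table for `w`: a table of length `|w|` consistent with and
complete for `w`. -/
def SepTable {Sig QI QT : Type} (R : RTS Sig QI QT) (w : List Sig)
    (τ : Table Sig) : Prop :=
  IsTable R w.length τ ∧ Consistent w τ ∧ Complete R w τ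


open Finset in
private lemma exists_sepTable_aux
    {Sig QI QT : Type} [Fintype Sig] [Fintype QI] [Fintype QT]
    (R : RTS Sig QI QT) (w : List Sig) :
    ∀ (n : ℕ) (τ : Table Sig), IsTable R w.length τ → Consistent w τ →
      w.length * Fintype.card Sig ≤
        (∑ j ∈ Finset.range w.length, (Incl w τ j).ncard) + n →
      ∃ τ' : Table Sig, SepTable R w τ' := by
  intro n
  induction n with
  | zero =>
      intro τ hT hC hb
      by_cases hc : Complete R w τ
      · exact ⟨τ, hT, hC, hc⟩
      · exfalso
        unfold Complete at hc
        push_neg at hc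
        obtain ⟨s, t, hst, hlen, hcons, j, a, hja, hna⟩ := hc
        have hjlt : j < w.length := by
          obtain ⟨h, -⟩ := List.getElem?_eq_some_iff.mp hja
          omega
        -- strict growth at position j
        have hsub : ∀ k, Incl w τ k ⊆ Incl w (τ ++ [(s, t)]) k := by
          intro k x hx
          rcases hx with h | ⟨p, hp, hpk⟩
          · exact Or.inl h
          · exact Or.inr ⟨p, List.mem_append_left _ hp, hpk⟩
        have hmem : a ∈ Incl w (τ ++ [(s, t)]) j :=
          Or.inr ⟨(s, t), List.mem_append_right _ (List.mem_singleton_self _), hja⟩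
        have hlt : (Incl w τ j).ncard < (Incl w (τ ++ [(s, t)]) j).ncard := by
          apply Set.ncard_lt_ncard
          · exact ⟨hsub j, fun h => hna (h hmem)⟩
          · exact Set.toFinite _
        have hsumlt :
            (∑ k ∈ Finset.range w.length, (Incl w τ k).ncard) <
            (∑ k ∈ Finset.range w.length, (Incl w (τ ++ [(s, t)]) k).ncard) := by
          apply Finset.sum_lt_sum
          · intro k _
            exact Set.ncard_le_ncard (hsub k) (Set.toFinite _)
          · exact ⟨j, Finset.mem_range.mpr hjlt, hlt⟩
        have hub : (∑ k ∈ Finset.range w.length, (Incl w (τ ++ [(s, t)]) k).ncard)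
            ≤ w.length * Fintype.card Sig := by
          calc (∑ k ∈ Finset.range w.length, (Incl w (τ ++ [(s, t)]) k).ncard)
              ≤ ∑ _k ∈ Finset.range w.length, Fintype.card Sig := by
                apply Finset.sum_le_sum
                intro k _
                have := Set.ncard_le_ncard (Set.subset_univ (Incl w (τ ++ [(s, t)]) k))
                  Set.finite_univ
                simpa [Set.ncard_univ] using this
            _ = w.length * Fintype.card Sig := by simp [Finset.sum_const, mul_comm]
        omega
  | succ n ih =>
      intro τ hT hC hb
      by_cases hc : Complete R w τ
      · exact ⟨τ, hT, hC, hc⟩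
      · unfold Complete at hc
        push_neg at hc
        obtain ⟨s, t, hst, hlen, hcons, j, a, hja, hna⟩ := hc
        have hjlt : j < w.length := by
          obtain ⟨h, -⟩ := List.getElem?_eq_some_iff.mp hja
          omega
        have hsub : ∀ k, Incl w τ k ⊆ Incl w (τ ++ [(s, t)]) k := by
          intro k x hx
          rcases hx with h | ⟨p, hp, hpk⟩
          · exact Or.inl h
          · exact Or.inr ⟨p, List.mem_append_left _ hp, hpk⟩
        have hmem : a ∈ Incl w (τ ++ [(s, t)]) j :=
          Or.inr ⟨(s, t), List.mem_append_right _ (List.mem_singleton_self _), hja⟩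
        have hlt : (Incl w τ j).ncard < (Incl w (τ ++ [(s, t)]) j).ncard := by
          apply Set.ncard_lt_ncard
          · exact ⟨hsub j, fun h => hna (h hmem)⟩
          · exact Set.toFinite _
        have hsumlt :
            (∑ k ∈ Finset.range w.length, (Incl w τ k).ncard) <
            (∑ k ∈ Finset.range w.length, (Incl w (τ ++ [(s, t)]) k).ncard) := by
          apply Finset.sum_lt_sum
          · intro k _
            exact Set.ncard_le_ncard (hsub k) (Set.toFinite _)
          · exact ⟨j, Finset.mem_range.mpr hjlt, hlt⟩
        apply ih (τ ++ [(s, t)])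
        · intro p hp
          rcases List.mem_append.mp hp with h | h
          · exact hT p h
          · have : p = (s, t) := List.mem_singleton.mp h
            subst this
            exact ⟨hst, hlen⟩
        · exact hcons
        · omega

/-- every configuration `w` of an RTS has at least one separation
table, i.e. a table consistent with and complete for `w`. -/
theorem exists_sepTable
    {Sig QI QT : Type} [Fintype Sig] [Fintype QI] [Fintype QT]
    (R : RTS Sig QI QT) (w : List Sig) :
    ∃ τ : Table Sig, SepTable R w τ := by
  apply exists_sepTable_aux R w (w.length * Fintype.card Sig) []
  · intro p hp; simp at hp
  · intro i h; simp at h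
  · simp
end

section
/- Let R = (Σ, I, T) be a regular transition system where I has n_I states and T has n_T states. Then there exists an NFA over Σ whose state type has cardinality at most (n_T + 1)^(n_T) · 2^(n_T) · 2^(n_T) · 2 · n_I and which recognizes exactly the language Ind_1(R). -/
/-!
The complements of a position-indexed family of letter sets form an inductive 1-formula exactly
when the family is closed backwards under `⇝`. Hence `u ⇝₁ w` iff `|u| = |w|` and each `u[j]`
lies in the backward closure of `w` at `j`, the least such family containing the letters of `w`.

The closure is computed in rounds. The states at a cut lying on accepting runs of the transducer
that write letters of round `s` increase with `s`, so at every cut they form a chain of at most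
`n_T + 1` sets, and a chain is determined by the rank of each state and its size. The automaton
reads `w`, guesses `u` and runs `I` on it; at every position `c` it also guesses a word `v` and a
position `k` with `v[k] = w[c]` and `u[c]` in the closure of `v` at `k`, and it keeps the chain
at the cut as its state. For soundness, a word assembled from such columns whose chains agree
at every cut contains, at each column, the closure of the column's own word. Runs for the
assembled word are threaded through sections (one chain member per cut, closed under the maps
that match rounds of neighbouring columns), by induction on the total level of the section.
-/

open Set

def Covered {α : Type*} (S : ℕ → Set α) (off : ℕ) (u : List α) : Prop :=
  ∀ i (hi : i < u.length), u[i] ∈ S (off + i)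

section Covered

variable {α β : Type*} {S S' : ℕ → Set α} {off : ℕ}

@[simp]
theorem covered_nil : Covered S off [] := fun _ h => absurd h (Nat.not_lt_zero _)

theorem covered_cons {a : α} {u : List α} :
    Covered S off (a :: u) ↔ a ∈ S off ∧ Covered S (off + 1) u := by
  refine ⟨fun h => ⟨h 0 (by simp), fun i hi => ?_⟩, fun ⟨ha, hu⟩ i hi => ?_⟩
  · have := h (i + 1) (by simpa using hi)
    rwa [Nat.add_assoc, Nat.add_comm 1]
  · cases i with
    | zero => simpa using ha
    | succ i => simpa [Nat.add_assoc, Nat.add_comm 1] using hu i (by simpa using hi)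

theorem covered_append {u v : List α} :
    Covered S off (u ++ v) ↔ Covered S off u ∧ Covered S (off + u.length) v := by
  induction u generalizing off with
  | nil => simp
  | cons a u ih => simp [covered_cons, ih, and_assoc, Nat.add_assoc, Nat.add_comm 1]

theorem Covered.mono (h : ∀ i, S i ⊆ S' i) {u : List α} (hu : Covered S off u) :
    Covered S' off u :=
  fun i hi => h _ (hu i hi)

theorem covered_map {f : β → α} {u : List β} :
    Covered S off (u.map f) ↔ Covered (fun i => f ⁻¹' S i) off u := by
  simp [Covered]

theorem covered_iUnion {F : ℕ → ℕ → Set α} (hF : Monotone F) {u : List α} :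
    Covered (fun i => ⋃ s, F s i) off u ↔ ∃ s, Covered (F s) off u := by
  refine ⟨fun h => ?_, fun ⟨s, hs⟩ => hs.mono fun i => subset_iUnion (F · i) s⟩
  induction u generalizing off with
  | nil => exact ⟨0, covered_nil⟩
  | cons a u ih =>
    obtain ⟨ha, hu⟩ := covered_cons.mp h
    obtain ⟨s, hs⟩ := mem_iUnion.mp ha
    obtain ⟨t, ht⟩ := ih hu
    refine ⟨max s t, covered_cons.mpr ⟨hF (le_max_left s t) off hs, ?_⟩⟩
    exact ht.mono fun i => hF (le_max_right s t) i

end Covered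

namespace NFA

variable {α β σ τ : Type*} {M : NFA α σ}

theorem mem_evalFrom_iff_exists_run {S : Set σ} {x : List α} {q : σ} :
    q ∈ M.evalFrom S x ↔ ∃ f : ℕ → σ, f 0 ∈ S ∧ f x.length = q ∧
      ∀ c (hc : c < x.length), f (c + 1) ∈ M.step (f c) x[c] := by
  induction x generalizing S with
  | nil =>
    exact ⟨fun h => ⟨fun _ => q, h, rfl, by simp⟩, fun ⟨f, h0, hq, _⟩ => hq ▸ h0⟩
  | cons a x ih =>
    rw [evalFrom_cons, ih]
    constructor
    · rintro ⟨f, h0, hq, hf⟩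
      obtain ⟨s, hs, hs0⟩ := mem_stepSet.mp h0
      refine ⟨fun | 0 => s | n + 1 => f n, hs, hq, fun c hc => ?_⟩
      cases c with
      | zero => exact hs0
      | succ c => exact hf c (by simpa using hc)
    · rintro ⟨f, h0, hq, hf⟩
      exact ⟨fun n => f (n + 1), mem_stepSet.mpr ⟨f 0, h0, hf 0 (by simp)⟩, hq,
        fun c hc => hf (c + 1) (by simpa using hc)⟩

theorem mem_accepts_iff_exists_run {x : List α} :
    x ∈ M.accepts ↔ ∃ f : ℕ → σ, f 0 ∈ M.start ∧ f x.length ∈ M.accept ∧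
      ∀ c (hc : c < x.length), f (c + 1) ∈ M.step (f c) x[c] := by
  simp only [mem_accepts, mem_evalFrom_iff_exists_run]
  exact ⟨fun ⟨q, hq, f, h0, hfq, hf⟩ => ⟨f, h0, hfq ▸ hq, hf⟩,
    fun ⟨f, h0, hf, hstep⟩ => ⟨_, hf, f, h0, rfl, hstep⟩⟩

theorem mem_acceptsFrom_iff_exists {S : Set σ} {x : List α} :
    x ∈ M.acceptsFrom S ↔ ∃ s ∈ S, x ∈ M.acceptsFrom {s} := by
  simp only [mem_acceptsFrom, mem_evalFrom_iff_exists (S := S)]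
  grind

variable (M) (S : ℕ → Set α)

def reachWithin (c : ℕ) : Set σ :=
  {q | ∃ p : List α, p.length = c ∧ Covered S 0 p ∧ q ∈ M.evalFrom M.start p}

def coreachWithin (n c : ℕ) : Set σ :=
  {q | ∃ p : List α, c + p.length = n ∧ Covered S c p ∧ p ∈ M.acceptsFrom {q}}

variable {M S}

@[simp]
theorem reachWithin_zero : M.reachWithin S 0 = M.start := by
  ext q
  simp [reachWithin]

theorem mem_reachWithin_succ {c : ℕ} {q' : σ} :
    q' ∈ M.reachWithin S (c + 1) ↔
      ∃ q ∈ M.reachWithin S c, ∃ x ∈ S c, q' ∈ M.step q x := by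
  constructor
  · rintro ⟨p, hp, hcov, hq'⟩
    obtain ⟨p, x, rfl⟩ := (List.eq_nil_or_concat p).resolve_left (by rintro rfl; simp at hp)
    rw [List.concat_eq_append, List.length_append, List.length_singleton,
      Nat.add_right_cancel_iff] at hp
    rw [List.concat_eq_append, covered_append, covered_cons, hp] at hcov
    rw [List.concat_eq_append, evalFrom_append, evalFrom_singleton, mem_stepSet] at hq'
    obtain ⟨q, hq, hq'⟩ := hq'
    exact ⟨q, ⟨p, hp, hcov.1, hq⟩, x, by simpa using hcov.2.1, hq'⟩
  · rintro ⟨q, ⟨p, rfl, hcov, hq⟩, x, hx, hq'⟩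
    refine ⟨p ++ [x], by simp,
      covered_append.mpr ⟨hcov, covered_cons.mpr ⟨by simpa, by simp⟩⟩, ?_⟩
    rw [evalFrom_append, evalFrom_singleton]
    exact mem_stepSet.mpr ⟨q, hq, hq'⟩

theorem coreachWithin_self (n : ℕ) : M.coreachWithin S n n = M.accept := by
  ext q
  simp [coreachWithin]

theorem le_of_mem_coreachWithin {n c : ℕ} {q : σ} (hq : q ∈ M.coreachWithin S n c) :
    c ≤ n := by
  obtain ⟨p, hp, -⟩ := hq
  omega

theorem mem_coreachWithin_iff {n c : ℕ} (hc : c < n) {q : σ} :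
    q ∈ M.coreachWithin S n c ↔
      ∃ x ∈ S c, ∃ q' ∈ M.step q x, q' ∈ M.coreachWithin S n (c + 1) := by
  constructor
  · rintro ⟨p, hp, hcov, hacc⟩
    obtain ⟨x, p, rfl⟩ :=
      List.exists_cons_of_ne_nil (show p ≠ [] by rintro rfl; simp at hp; omega)
    rw [covered_cons] at hcov
    rw [cons_mem_acceptsFrom, stepSet_singleton, mem_acceptsFrom_iff_exists] at hacc
    obtain ⟨q', hq', hacc⟩ := hacc
    exact ⟨x, hcov.1, q', hq', p, by simp at hp; omega, hcov.2, hacc⟩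
  · rintro ⟨x, hx, q', hq', p, hp, hcov, hacc⟩
    refine ⟨x :: p, by simp; omega, covered_cons.mpr ⟨hx, hcov⟩, ?_⟩
    rw [cons_mem_acceptsFrom, stepSet_singleton, mem_acceptsFrom_iff_exists]
    exact ⟨q', hq', hacc⟩

theorem reachWithin_mono {S' : ℕ → Set α} (h : ∀ i, S i ⊆ S' i) (c : ℕ) :
    M.reachWithin S c ⊆ M.reachWithin S' c :=
  fun _ ⟨p, hp, hcov, hq⟩ => ⟨p, hp, hcov.mono h, hq⟩

theorem coreachWithin_mono {S' : ℕ → Set α} (h : ∀ i, S i ⊆ S' i) (n c : ℕ) :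
    M.coreachWithin S n c ⊆ M.coreachWithin S' n c :=
  fun _ ⟨p, hp, hcov, hq⟩ => ⟨p, hp, hcov.mono h, hq⟩

theorem exists_covered_mem_accepts_iff {n j : ℕ} {x : α} :
    (∃ p ∈ M.accepts, p.length = n ∧ Covered S 0 p ∧ p[j]? = some x) ↔
      x ∈ S j ∧
        ∃ q ∈ M.reachWithin S j, ∃ q' ∈ M.step q x, q' ∈ M.coreachWithin S n (j + 1) := by
  constructor
  · rintro ⟨p, hacc, rfl, hcov, hx⟩
    obtain ⟨hj, rfl⟩ := List.getElem?_eq_some_iff.mp hx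
    have hsplit : p = p.take j ++ p[j] :: p.drop (j + 1) := by
      rw [← List.drop_eq_getElem_cons hj, List.take_append_drop]
    have hlen : (p.take j).length = j := by simp; omega
    rw [hsplit, covered_append, covered_cons, hlen, Nat.zero_add] at hcov
    rw [hsplit, accepts_eq_acceptsFrom_start, append_mem_acceptsFrom, cons_mem_acceptsFrom,
      mem_acceptsFrom_iff_exists] at hacc
    obtain ⟨q', hq', hacc⟩ := hacc
    obtain ⟨q, hq, hq'⟩ := mem_stepSet.mp hq'
    refine ⟨by simpa using hcov.2.1, q, ⟨_, hlen, hcov.1, hq⟩, q', hq', _, ?_, hcov.2.2,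
      hacc⟩
    simp; omega
  · rintro ⟨hx, q, ⟨p₁, rfl, hcov₁, hq⟩, q', hq', p₂, rfl, hcov₂, hacc⟩
    refine ⟨p₁ ++ x :: p₂, ?_, by simp; omega,
      covered_append.mpr ⟨hcov₁, covered_cons.mpr ⟨by simpa, by simpa⟩⟩, by simp⟩
    rw [accepts_eq_acceptsFrom_start, append_mem_acceptsFrom, cons_mem_acceptsFrom,
      mem_acceptsFrom_iff_exists]
    exact ⟨q', mem_stepSet.mpr ⟨q, hq, hq'⟩, hacc⟩

def relPreimage (C : NFA (α × β) σ) (I : NFA β τ) : NFA α (σ × τ) where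
  step p a := {p' | ∃ b, p'.1 ∈ C.step p.1 (a, b) ∧ p'.2 ∈ I.step p.2 b}
  start := C.start ×ˢ I.start
  accept := C.accept ×ˢ I.accept

theorem mem_relPreimage_accepts {C : NFA (α × β) σ} {I : NFA β τ} {x : List α} :
    x ∈ (C.relPreimage I).accepts ↔
      ∃ u ∈ I.accepts, u.length = x.length ∧ x.zip u ∈ C.accepts := by
  simp only [mem_accepts_iff_exists_run]
  constructor
  · rintro ⟨f, h0, hacc, hstep⟩
    choose b hb using hstep
    refine ⟨List.ofFn fun c : Fin x.length => b c c.2, ⟨fun c => (f c).2, h0.2, by simpa using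
      hacc.2, fun c hc => by simpa using (hb c (by simpa using hc)).2⟩, by simp,
      fun c => (f c).1, h0.1, by simpa using hacc.1, fun c hc => ?_⟩
    simpa using (hb c (by simpa using hc)).1
  · rintro ⟨u, ⟨g, hg0, hgacc, hg⟩, hlen, f, hf0, hfacc, hf⟩
    refine ⟨fun c => (f c, g c), ⟨hf0, hg0⟩,
      ⟨by simpa [hlen] using hfacc, hlen ▸ hgacc⟩, fun c hc =>
        ⟨u[c], List.getElem_zip ▸ hf c (by simp [hlen, hc]), hg c (by omega)⟩⟩

end NFA

section Chains

variable {α : Type*}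

theorem IsChain.injOn_of_ssubset {β : Type*} [Preorder β] {F : Set (Set α)}
    (hF : IsChain (· ⊆ ·) F) {f : Set α → β}
    (hf : ∀ V ∈ F, ∀ V', V ⊂ V' → f V < f V') : InjOn f F := by
  intro V hV V' hV' he
  by_contra hne
  rcases hF.total hV hV' with h | h
  · exact (hf V hV V' (h.ssubset_of_ne hne)).ne he
  · exact (hf V' hV' V (h.ssubset_of_ne (Ne.symm hne))).ne he.symm

theorem IsChain.ncard_le [Fintype α] {F : Set (Set α)} (hF : IsChain (· ⊆ ·) F) :
    F.ncard ≤ Fintype.card α + 1 := by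
  calc F.ncard ≤ (Iio (Fintype.card α + 1)).ncard :=
        ncard_le_ncard_of_injOn ncard
          (fun V _ => Nat.lt_succ_of_le ((ncard_le_ncard (subset_univ V)).trans_eq (by simp)))
          (hF.injOn_of_ssubset fun V _ V' h => ncard_lt_ncard h) (toFinite _)
    _ = Fintype.card α + 1 := by rw [← Finset.coe_range, ncard_coe_finset, Finset.card_range]

variable (F : Set (Set α))

noncomputable def levelIn (V : Set α) : ℕ := {V' ∈ F | V' ⊂ V}.ncard

noncomputable def rankIn (a : α) : ℕ := {V ∈ F | a ∉ V}.ncard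

variable {F} [Finite α]

theorem levelIn_mono {V V' : Set α} (h : V ⊆ V') : levelIn F V ≤ levelIn F V' :=
  ncard_le_ncard (fun _ ⟨hW, hWV⟩ => ⟨hW, hWV.trans_le h⟩) (toFinite _)

theorem levelIn_lt_levelIn {V V' : Set α} (hV : V ∈ F) (h : V ⊂ V') :
    levelIn F V < levelIn F V' := by
  have hsub : insert V {W ∈ F | W ⊂ V} ⊆ {W ∈ F | W ⊂ V'} := by
    rintro W (rfl | ⟨hW, hWV⟩)
    · exact ⟨hV, h⟩
    · exact ⟨hW, hWV.trans h⟩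
  calc levelIn F V < (insert V {W ∈ F | W ⊂ V}).ncard := by
        rw [ncard_insert_of_notMem (fun hc => hc.2.ne rfl) (toFinite _)]
        exact Nat.lt_succ_self _
    _ ≤ levelIn F V' := ncard_le_ncard hsub (toFinite _)

theorem levelIn_lt_ncard {V : Set α} (hV : V ∈ F) : levelIn F V < F.ncard :=
  ncard_lt_ncard ⟨fun _ hW => hW.1, fun h => (h hV).2.ne rfl⟩ (toFinite _)

theorem rankIn_le_ncard (a : α) : rankIn F a ≤ F.ncard :=
  ncard_le_ncard (fun _ hW => hW.1) (toFinite _)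

theorem IsChain.mem_iff_rankIn_le (hF : IsChain (· ⊆ ·) F) {V : Set α} (hV : V ∈ F)
    (a : α) : a ∈ V ↔ rankIn F a ≤ levelIn F V := by
  constructor
  · intro ha
    refine ncard_le_ncard (fun W ⟨hW, haW⟩ => ⟨hW, ?_⟩) (toFinite _)
    rcases hF.total hW hV with h | h
    · exact h.ssubset_of_ne (by rintro rfl; exact haW ha)
    · exact absurd (h ha) haW
  · intro hle
    by_contra ha
    have hsub : insert V {W ∈ F | W ⊂ V} ⊆ {W ∈ F | a ∉ W} := by
      rintro W (rfl | ⟨hW, hWV⟩)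
      · exact ⟨hV, ha⟩
      · exact ⟨hW, fun h => ha (hWV.subset h)⟩
    have := ncard_le_ncard hsub (toFinite _)
    rw [ncard_insert_of_notMem (fun hc => hc.2.ne rfl) (toFinite _)] at this
    exact absurd hle (by unfold rankIn levelIn; omega)

theorem IsChain.eq_image_rankIn (hF : IsChain (· ⊆ ·) F) :
    F = (fun ℓ => {a | rankIn F a ≤ ℓ}) '' Iio F.ncard := by
  have hlev : levelIn F '' F = Iio F.ncard := by
    refine eq_of_subset_of_ncard_le (fun _ ⟨V, hV, hℓ⟩ => hℓ ▸ levelIn_lt_ncard hV) ?_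
      (toFinite _)
    rw [(hF.injOn_of_ssubset fun V hV _ => levelIn_lt_levelIn hV).ncard_image,
      ← Finset.coe_range, ncard_coe_finset, Finset.card_range]
  ext V
  constructor
  · intro hV
    exact ⟨levelIn F V, levelIn_lt_ncard hV, by ext a; exact (hF.mem_iff_rankIn_le hV a).symm⟩
  · rintro ⟨ℓ, hℓ, rfl⟩
    obtain ⟨V, hV, rfl⟩ := hlev ▸ hℓ
    convert hV using 1
    ext a
    exact (hF.mem_iff_rankIn_le hV a).symm

end Chains

abbrev SetChain (α : Type*) := {F : Set (Set α) // IsChain (· ⊆ ·) F}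

section SetChain

variable {α : Type*}

noncomputable instance [Finite α] : Fintype (SetChain α) := Fintype.ofFinite _

theorem card_setChain_le [Fintype α] :
    Fintype.card (SetChain α) ≤ (Fintype.card α + 2) ^ (Fintype.card α + 1) := by
  classical
  let code : SetChain α → (α → Fin (Fintype.card α + 2)) × Fin (Fintype.card α + 2) :=
    fun F => (fun a => ⟨rankIn F.1 a, (rankIn_le_ncard a).trans_lt
      (Nat.lt_succ_of_le F.2.ncard_le)⟩, ⟨F.1.ncard, Nat.lt_succ_of_le F.2.ncard_le⟩)
  have hcode : Function.Injective code := by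
    intro F G h
    simp only [code, Prod.mk.injEq, funext_iff, Fin.mk.injEq] at h
    rw [Subtype.ext_iff, F.2.eq_image_rankIn, G.2.eq_image_rankIn]
    simp only [h.1, h.2]
  calc Fintype.card (SetChain α) ≤ _ := Fintype.card_le_of_injective code hcode
    _ = _ := by simp [pow_succ]

end SetChain

section FirstIndex

variable {α : Type*} {f : ℕ → α} {a b : α} {s : ℕ}

/-- `0` when `f` never takes the value `a`. -/
noncomputable def firstIndex (f : ℕ → α) (a : α) : ℕ := sInf {s | f s = a}

theorem apply_firstIndex (ha : a ∈ range f) : f (firstIndex f a) = a :=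
  Nat.sInf_mem (s := {s | f s = a}) ha

theorem firstIndex_le (h : f s = a) : firstIndex f a ≤ s := Nat.sInf_le h

theorem lt_of_lt_firstIndex [PartialOrder α] (hf : Monotone f) (ha : a ∈ range f)
    (hs : s < firstIndex f a) : f s < a :=
  ((hf hs.le).trans_eq (apply_firstIndex ha)).lt_of_ne fun h => (firstIndex_le h).not_gt hs

theorem firstIndex_mono [PartialOrder α] (hf : Monotone f) (ha : a ∈ range f)
    (hb : b ∈ range f) (hab : a ≤ b) : firstIndex f a ≤ firstIndex f b :=
  not_lt.mp fun h =>
    (lt_of_lt_firstIndex hf ha h).not_ge (hab.trans_eq (apply_firstIndex hb).symm)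

end FirstIndex

def sndIn {α β : Type*} (S : ℕ → Set β) (i : ℕ) : Set (α × β) := Prod.snd ⁻¹' S i

theorem covered_sndIn_iff {α β : Type*} {S : ℕ → Set β} {off : ℕ} {p : List (α × β)} :
    Covered (sndIn S) off p ↔ Covered S off (p.map Prod.snd) :=
  covered_map.symm

theorem not_sat1_iff {Sig : Type} {v : List Sig} {φ : OneFormula Sig} :
    ¬ Sat1 v φ ↔ v.length = φ.length ∧
      ∀ j (hv : j < v.length) (hφ : j < φ.length), v[j] ∉ φ[j] := by
  simp [Sat1]

namespace RTS

variable {Sig QI QT : Type} (R : RTS Sig QI QT)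

def predLetters (S : ℕ → Set Sig) (n j : ℕ) : Set Sig :=
  {a | ∃ v v', R.Step v v' ∧ v'.length = n ∧ Covered S 0 v' ∧ v[j]? = some a}

def backStage (w : List Sig) : ℕ → ℕ → Set Sig
  | 0, j => {a | w[j]? = some a}
  | s + 1, j => backStage w s j ∪ R.predLetters (backStage w s) w.length j

def backClosure (w : List Sig) (j : ℕ) : Set Sig := ⋃ s, R.backStage w s j

variable {R}

theorem mem_predLetters_iff {S : ℕ → Set Sig} {n j : ℕ} {a : Sig} :
    a ∈ R.predLetters S n j ↔ ∃ b ∈ S j, ∃ q ∈ R.T.reachWithin (sndIn S) j,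
      ∃ q' ∈ R.T.step q (a, b), q' ∈ R.T.coreachWithin (sndIn S) n (j + 1) := by
  have hpairs : a ∈ R.predLetters S n j ↔
      ∃ b, ∃ p ∈ R.T.accepts,
        p.length = n ∧ Covered (sndIn S) 0 p ∧ p[j]? = some (a, b) := by
    constructor
    · rintro ⟨v, v', ⟨hlen, hacc⟩, rfl, hcov, ha⟩
      obtain ⟨hj, rfl⟩ := List.getElem?_eq_some_iff.mp ha
      refine ⟨v'[j]'(hlen ▸ hj), _, hacc, by simp [hlen], ?_,
        by simp [List.getElem?_zip_eq_some]⟩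
      rwa [covered_sndIn_iff, List.map_snd_zip (by omega)]
    · rintro ⟨b, p, hacc, rfl, hcov, hp⟩
      refine ⟨p.map Prod.fst, p.map Prod.snd, ⟨by simp, ?_⟩, by simp,
        covered_sndIn_iff.mp hcov, by simp [hp]⟩
      rwa [← List.zip_of_prod rfl rfl]
  rw [hpairs]
  simp only [NFA.exists_covered_mem_accepts_iff, sndIn, mem_preimage]

variable (R)

theorem backStage_mono (w : List Sig) : Monotone (R.backStage w) :=
  monotone_nat_of_le_succ fun _ _ => by simp [backStage]

theorem backStage_subset_backClosure (w : List Sig) (s j : ℕ) :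
    R.backStage w s j ⊆ R.backClosure w j :=
  subset_iUnion (R.backStage w · j) s

theorem getElem_mem_backClosure {w : List Sig} {j : ℕ} (hj : j < w.length) :
    w[j] ∈ R.backClosure w j :=
  R.backStage_subset_backClosure w 0 j (List.getElem?_eq_getElem hj)

theorem predLetters_backClosure_subset (w : List Sig) (j : ℕ) :
    R.predLetters (R.backClosure w) w.length j ⊆ R.backClosure w j := by
  rintro a ⟨v, v', hstep, hlen, hcov, ha⟩
  obtain ⟨s, hs⟩ := (covered_iUnion (R.backStage_mono w)).mp hcov
  exact R.backStage_subset_backClosure w (s + 1) j (Or.inr ⟨v, v', hstep, hlen, hs, ha⟩)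

theorem covered_backClosure_of_step {w v v' : List Sig} (hstep : R.Step v v')
    (hlen : v'.length = w.length) (hcov : Covered (R.backClosure w) 0 v') :
    Covered (R.backClosure w) 0 v := fun j hj =>
  R.predLetters_backClosure_subset w _ ⟨v, v', hstep, hlen, hcov, by simp⟩

variable {R}

theorem length_eq_and_covered_of_potReach1 {u w : List Sig} (h : PotReach1 R u w) :
    u.length = w.length ∧ Covered (R.backClosure w) 0 u := by
  let φ : OneFormula Sig := List.ofFn fun j : Fin w.length => (R.backClosure w j)ᶜ
  have hφ : ∀ v : List Sig,
      ¬ Sat1 v φ ↔ v.length = w.length ∧ Covered (R.backClosure w) 0 v := by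
    intro v
    simp only [not_sat1_iff, φ, List.length_ofFn, List.getElem_ofFn, mem_compl_iff, not_not,
      Covered, Nat.zero_add]
    exact ⟨fun ⟨hlen, h⟩ => ⟨hlen, fun j hj => h j hj (hlen ▸ hj)⟩,
      fun ⟨hlen, h⟩ => ⟨hlen, fun j hj _ => h j hj⟩⟩
  have hind : IsInductive1Formula R φ := by
    intro v v' hv hstep
    by_contra hv'
    obtain ⟨hlen, hcov⟩ := (hφ v').mp hv'
    exact (hφ v).mpr ⟨hstep.1.trans hlen, R.covered_backClosure_of_step hstep hlen hcov⟩ hv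
  by_contra hu
  exact (hφ w).mpr ⟨rfl, fun j hj => by simpa using R.getElem_mem_backClosure hj⟩
    (h φ hind (by_contra fun h' => hu ((hφ u).mp h')))

theorem backStage_subset_compl {φ : OneFormula Sig} {w : List Sig} (hφ : IsInductive1Formula R φ)
    (hw : ¬ Sat1 w φ) (s j : ℕ) (hj : j < φ.length) : R.backStage w s j ⊆ (φ[j])ᶜ := by
  rw [not_sat1_iff] at hw
  induction s generalizing j with
  | zero =>
    intro a ha
    obtain ⟨hj', rfl⟩ := List.getElem?_eq_some_iff.mp ha
    exact hw.2 j hj' hj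
  | succ s ih =>
    rintro a (ha | ⟨v, v', hstep, hlen, hcov, ha⟩)
    · exact ih j hj ha
    have hv' : ¬ Sat1 v' φ := not_sat1_iff.mpr
      ⟨hlen.trans hw.1, fun i hi hiφ => ih i hiφ (by simpa using hcov i hi)⟩
    obtain ⟨hjv, rfl⟩ := List.getElem?_eq_some_iff.mp ha
    exact (not_sat1_iff.mp fun hv => hv' (hφ v v' hv hstep)).2 j hjv hj

theorem potReach1_iff {u w : List Sig} :
    PotReach1 R u w ↔ u.length = w.length ∧ Covered (R.backClosure w) 0 u := by
  refine ⟨length_eq_and_covered_of_potReach1, fun ⟨hlen, hcov⟩ φ hφ hu => ?_⟩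
  by_contra hw
  have hlenφ := (not_sat1_iff.mp hw).1
  refine not_sat1_iff.mpr ⟨hlen.trans hlenφ, fun j hj hjφ => ?_⟩ hu
  obtain ⟨s, hs⟩ := mem_iUnion.mp (show u[j] ∈ R.backClosure w j by simpa using hcov j hj)
  exact backStage_subset_compl hφ hw s j hjφ hs

variable (R)

def usable (w : List Sig) (s c : ℕ) : Set QT :=
  R.T.reachWithin (sndIn (R.backStage w s)) c ∩
    R.T.coreachWithin (sndIn (R.backStage w s)) w.length c

theorem usable_mono (w : List Sig) (c : ℕ) : Monotone fun s => R.usable w s c := by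
  intro s t hst
  have h : ∀ i, sndIn (R.backStage w s) i ⊆ (sndIn (R.backStage w t) i : Set (Sig × Sig)) :=
    fun i _ hx => R.backStage_mono w hst i hx
  exact inter_subset_inter (NFA.reachWithin_mono h c) (NFA.coreachWithin_mono h _ c)

def fam (w : List Sig) (c : ℕ) : Set (Set QT) := range fun s => R.usable w s c

theorem isChain_fam (w : List Sig) (c : ℕ) : IsChain (· ⊆ ·) (R.fam w c) :=
  (R.usable_mono w c).isChain_range

def chainAt (w : List Sig) (c : ℕ) : SetChain QT := ⟨R.fam w c, R.isChain_fam w c⟩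

variable {R}

theorem subset_start_of_mem_fam_zero {w : List Sig} {V : Set QT} (hV : V ∈ R.fam w 0) :
    V ⊆ R.T.start := by
  obtain ⟨s, rfl⟩ := hV
  exact inter_subset_left.trans NFA.reachWithin_zero.subset

theorem subset_accept_of_mem_fam_length {w : List Sig} {V : Set QT}
    (hV : V ∈ R.fam w w.length) : V ⊆ R.T.accept := by
  obtain ⟨s, rfl⟩ := hV
  exact inter_subset_right.trans (NFA.coreachWithin_self _).subset

theorem exists_pred_of_mem_usable_succ {w : List Sig} {s j : ℕ} (hj : j < w.length) {q' : QT}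
    (hq' : q' ∈ R.usable w s (j + 1)) :
    ∃ q ∈ R.usable w s j, ∃ x : Sig × Sig,
      x.2 ∈ R.backStage w s j ∧ q' ∈ R.T.step q x := by
  obtain ⟨q, hq, x, hx, hstep⟩ := NFA.mem_reachWithin_succ.mp hq'.1
  exact ⟨q, ⟨hq, (NFA.mem_coreachWithin_iff hj).mpr ⟨x, hx, q', hstep, hq'.2⟩⟩, x, hx,
    hstep⟩

theorem exists_succ_of_mem_usable {w : List Sig} {s j : ℕ} (hj : j < w.length) {q : QT}
    (hq : q ∈ R.usable w s j) :
    ∃ x : Sig × Sig, x.2 ∈ R.backStage w s j ∧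
      ∃ q' ∈ R.T.step q x, q' ∈ R.usable w s (j + 1) := by
  obtain ⟨x, hx, q', hstep, hq'⟩ := (NFA.mem_coreachWithin_iff hj).mp hq.2
  exact ⟨x, hx, q', hstep, NFA.mem_reachWithin_succ.mpr ⟨q, hq.1, x, hx, hstep⟩, hq'⟩

theorem mem_backStage_succ {w : List Sig} {s j : ℕ} {a : Sig}
    (ha : a ∈ R.backStage w (s + 1) j) :
    a ∈ R.backStage w s j ∨ ∃ b ∈ R.backStage w s j, ∃ q ∈ R.usable w s j,
      ∃ q' ∈ R.T.step q (a, b), q' ∈ R.usable w s (j + 1) := by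
  refine ha.imp_right fun ha => ?_
  obtain ⟨b, hb, q, hq, q', hstep, hq'⟩ := mem_predLetters_iff.mp ha
  have hj : j < w.length := NFA.le_of_mem_coreachWithin hq'
  exact ⟨b, hb, q, ⟨hq, (NFA.mem_coreachWithin_iff hj).mpr ⟨_, hb, q', hstep, hq'⟩⟩, q',
    hstep, NFA.mem_reachWithin_succ.mpr ⟨q, hq, _, hb, hstep⟩, hq'⟩

theorem mem_backClosure_of_step {w : List Sig} {j : ℕ} {a b : Sig} {q q' : QT}
    (hb : b ∈ R.backClosure w j) (hq : q ∈ R.T.reachWithin (sndIn (R.backClosure w)) j)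
    (hstep : q' ∈ R.T.step q (a, b))
    (hq' : q' ∈ R.T.coreachWithin (sndIn (R.backClosure w)) w.length (j + 1)) :
    a ∈ R.backClosure w j :=
  R.predLetters_backClosure_subset w j (mem_predLetters_iff.mpr ⟨b, hb, q, hq, q', hstep, hq'⟩)

variable {w : List Sig}

/-- The word `w` assembled from the letters `(word c)[pos c]` of other words, such that
neighbouring columns agree on the family of usable sets at their common cut (`cut c`). -/
structure Mosaic (R : RTS Sig QI QT) (w : List Sig) where
  word : ℕ → List Sig
  pos : ℕ → ℕ
  cut : ℕ → Set (Set QT)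
  getElem?_word : ∀ c (hc : c < w.length), (word c)[pos c]? = some w[c]
  fam_pos : ∀ c < w.length, R.fam (word c) (pos c) = cut c
  fam_pos_succ : ∀ c < w.length, R.fam (word c) (pos c + 1) = cut (c + 1)
  subset_start : ∀ V ∈ cut 0, V ⊆ R.T.start
  subset_accept : ∀ V ∈ cut w.length, V ⊆ R.T.accept

namespace Mosaic

variable (M : Mosaic R w) {c d s : ℕ}

def usableLeft (c s : ℕ) : Set QT := R.usable (M.word c) s (M.pos c)

def usableRight (c s : ℕ) : Set QT := R.usable (M.word c) s (M.pos c + 1)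

theorem pos_lt (hc : c < w.length) : M.pos c < (M.word c).length :=
  (List.getElem?_eq_some_iff.mp (M.getElem?_word c hc)).1

theorem range_usableLeft (hc : c < w.length) : range (M.usableLeft c) = M.cut c :=
  M.fam_pos c hc

theorem range_usableRight (hc : c < w.length) : range (M.usableRight c) = M.cut (c + 1) :=
  M.fam_pos_succ c hc

theorem usableLeft_mono (c : ℕ) : Monotone (M.usableLeft c) := R.usable_mono _ _

theorem usableRight_mono (c : ℕ) : Monotone (M.usableRight c) := R.usable_mono _ _

noncomputable def next (c : ℕ) (V : Set QT) : Set QT :=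
  M.usableRight c (firstIndex (M.usableLeft c) V)

noncomputable def prev (c : ℕ) (V : Set QT) : Set QT :=
  M.usableLeft c (firstIndex (M.usableRight c) V)

theorem next_mem_cut (hc : c < w.length) (V : Set QT) : M.next c V ∈ M.cut (c + 1) :=
  M.range_usableRight hc ▸ mem_range_self _

theorem prev_mem_cut (hc : c < w.length) (V : Set QT) : M.prev c V ∈ M.cut c :=
  M.range_usableLeft hc ▸ mem_range_self _

theorem next_mono (hc : c < w.length) {V V' : Set QT} (hV : V ∈ M.cut c) (hV' : V' ∈ M.cut c)
    (h : V ⊆ V') : M.next c V ⊆ M.next c V' := by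
  rw [← M.range_usableLeft hc] at hV hV'
  exact M.usableRight_mono c (firstIndex_mono (M.usableLeft_mono c) hV hV' h)

theorem prev_mono (hc : c < w.length) {V V' : Set QT} (hV : V ∈ M.cut (c + 1))
    (hV' : V' ∈ M.cut (c + 1)) (h : V ⊆ V') : M.prev c V ⊆ M.prev c V' := by
  rw [← M.range_usableRight hc] at hV hV'
  exact M.usableLeft_mono c (firstIndex_mono (M.usableRight_mono c) hV hV' h)

theorem next_usableLeft_subset (c s : ℕ) : M.next c (M.usableLeft c s) ⊆ M.usableRight c s :=
  M.usableRight_mono c (firstIndex_le rfl)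

theorem prev_usableRight_subset (c s : ℕ) : M.prev c (M.usableRight c s) ⊆ M.usableLeft c s :=
  M.usableLeft_mono c (firstIndex_le rfl)

theorem next_prev_subset (hc : c < w.length) {V : Set QT} (hV : V ∈ M.cut (c + 1)) :
    M.next c (M.prev c V) ⊆ V := by
  rw [← M.range_usableRight hc] at hV
  exact (M.next_usableLeft_subset c _).trans (apply_firstIndex hV).subset

theorem prev_next_subset (hc : c < w.length) {V : Set QT} (hV : V ∈ M.cut c) :
    M.prev c (M.next c V) ⊆ V := by
  rw [← M.range_usableLeft hc] at hV
  exact (M.prev_usableRight_subset c _).trans (apply_firstIndex hV).subset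

structure IsSection (τ : ℕ → Set QT) : Prop where
  mem_cut : ∀ d ≤ w.length, τ d ∈ M.cut d
  prev_subset : ∀ d < w.length, M.prev d (τ (d + 1)) ⊆ τ d
  next_subset : ∀ d < w.length, M.next d (τ d) ⊆ τ (d + 1)

/-- `A` at cut `c`, pushed to the cuts below `c` by `prev` (the recursion removes the top cut). -/
noncomputable def spreadLeft : ℕ → Set QT → ℕ → Set QT
  | 0, A, _ => A
  | c + 1, A, d => if d = c + 1 then A else spreadLeft c (M.prev c A) d

noncomputable def spreadRight (c : ℕ) (B : Set QT) : ℕ → Set QT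
  | 0 => B
  | d + 1 => if d < c then B else M.next d (spreadRight c B d)

/-- The least section through the usable sets of round `s` of column `c`. -/
noncomputable def spread (c s d : ℕ) : Set QT :=
  if d ≤ c then M.spreadLeft c (M.usableLeft c s) d
  else M.spreadRight (c + 1) (M.usableRight c s) d

theorem spreadLeft_self (c : ℕ) (A : Set QT) : M.spreadLeft c A c = A := by
  cases c <;> simp [spreadLeft]

theorem spreadLeft_of_lt {A : Set QT} (h : d < c) :
    M.spreadLeft c A d = M.prev d (M.spreadLeft c A (d + 1)) := by
  induction c generalizing A with
  | zero => omega
  | succ c ih =>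
    simp only [spreadLeft, if_neg h.ne, Nat.add_right_cancel_iff]
    rcases (Nat.lt_succ_iff.mp h).eq_or_lt with rfl | h'
    · simp [spreadLeft_self]
    · rw [if_neg h'.ne, ih h']

theorem spreadRight_of_le {B : Set QT} (h : d ≤ c) : M.spreadRight c B d = B := by
  cases d with
  | zero => rfl
  | succ d => simp [spreadRight, show d < c by omega]

theorem spreadRight_succ {B : Set QT} (h : c ≤ d) :
    M.spreadRight c B (d + 1) = M.next d (M.spreadRight c B d) := by
  simp [spreadRight, not_lt.mpr h]

theorem spread_self (c s : ℕ) : M.spread c s c = M.usableLeft c s := by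
  simp [spread, spreadLeft_self]

theorem spread_succ_self (c s : ℕ) : M.spread c s (c + 1) = M.usableRight c s := by
  simp [spread, spreadRight_of_le]

theorem spread_of_lt (h : d < c) : M.spread c s d = M.prev d (M.spread c s (d + 1)) := by
  simp [spread, h.le, Nat.succ_le_of_lt h, spreadLeft_of_lt M h]

theorem spread_succ_of_lt (h : c < d) : M.spread c s (d + 1) = M.next d (M.spread c s d) := by
  simp [spread, not_le.mpr h, not_le.mpr (h.trans (Nat.lt_succ_self d)), spreadRight_succ M h]

theorem isSection_spread (hc : c < w.length) (s : ℕ) : M.IsSection (M.spread c s) := by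
  have hmem : ∀ d ≤ w.length, M.spread c s d ∈ M.cut d := by
    intro d hd
    rcases lt_trichotomy d c with h | rfl | h
    · exact M.spread_of_lt h ▸ M.prev_mem_cut (h.trans hc) _
    · exact M.spread_self d s ▸ M.range_usableLeft hc ▸ mem_range_self s
    obtain ⟨d, rfl⟩ := Nat.exists_eq_add_of_lt h
    rcases (Nat.le_add_right c d).eq_or_lt with h' | h'
    · rw [← h', M.spread_succ_self]
      exact M.range_usableRight hc ▸ mem_range_self s
    · rw [M.spread_succ_of_lt h']
      exact M.next_mem_cut (by omega) _
  refine ⟨hmem, fun d hd => ?_, fun d hd => ?_⟩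
  · rcases lt_trichotomy d c with h | rfl | h
    · exact (M.spread_of_lt h).symm.subset
    · rw [M.spread_self, M.spread_succ_self]
      exact M.prev_usableRight_subset d s
    · rw [M.spread_succ_of_lt h]
      exact M.prev_next_subset hd (hmem d hd.le)
  · rcases lt_trichotomy d c with h | rfl | h
    · rw [M.spread_of_lt h]
      exact M.next_prev_subset hd (hmem (d + 1) hd)
    · rw [M.spread_self, M.spread_succ_self]
      exact M.next_usableLeft_subset d s
    · exact (M.spread_succ_of_lt h).symm.subset

theorem spread_subset {τ : ℕ → Set QT} (hτ : M.IsSection τ) (hc : c < w.length)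
    (hl : M.usableLeft c s ⊆ τ c) (hr : M.usableRight c s ⊆ τ (c + 1)) :
    ∀ d ≤ w.length, M.spread c s d ⊆ τ d := by
  have hσ := M.isSection_spread hc s
  intro d hd
  rcases le_or_gt d c with h | h
  · induction h using Nat.decreasingInduction with
    | self => exact M.spread_self c s ▸ hl
    | of_succ d hdc ih =>
      rw [M.spread_of_lt hdc]
      exact (M.prev_mono (hdc.trans hc) (hσ.mem_cut _ (by omega)) (hτ.mem_cut _ (by omega))
        (ih (by omega))).trans (hτ.prev_subset d (hdc.trans hc))
  · obtain h : c + 1 ≤ d := h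
    induction d, h using Nat.le_induction with
    | base => exact M.spread_succ_self c s ▸ hr
    | succ d hcd ih =>
      rw [M.spread_succ_of_lt hcd]
      exact (M.next_mono (by omega) (hσ.mem_cut _ (by omega)) (hτ.mem_cut _ (by omega))
        (ih (by omega))).trans (hτ.next_subset d (by omega))

variable {τ : ℕ → Set QT}

theorem backStage_word_subset_backClosure {m : ℕ} (hm : m < w.length) (t : ℕ)
    (hruns : ∀ s < t, ∀ d ≤ w.length, M.spread m s d ⊆
      R.T.reachWithin (sndIn (R.backClosure w)) d ∩
        R.T.coreachWithin (sndIn (R.backClosure w)) w.length d) :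
    R.backStage (M.word m) t (M.pos m) ⊆ R.backClosure w m := by
  induction t with
  | zero =>
    intro a ha
    rw [show a = w[m] from Option.some.inj ((Eq.symm ha).trans (M.getElem?_word m hm))]
    exact R.getElem_mem_backClosure hm
  | succ t ih =>
    have ih := ih fun s hs => hruns s (by omega)
    intro a ha
    obtain ha | ⟨b, hb, q, hq, q', hstep, hq'⟩ := mem_backStage_succ ha
    · exact ih ha
    have hruns := hruns t (Nat.lt_succ_self t)
    exact mem_backClosure_of_step (ih hb)
      ((hruns m hm.le (M.spread_self m t ▸ hq)).1) hstep
      ((hruns (m + 1) hm (M.spread_succ_self m t ▸ hq')).2)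

theorem IsSection.subset_reachWithin (hτ : M.IsSection τ)
    (hstage : ∀ d < w.length, R.backStage (M.word d) (firstIndex (M.usableRight d) (τ (d + 1)))
      (M.pos d) ⊆ R.backClosure w d) :
    ∀ d ≤ w.length, τ d ⊆ R.T.reachWithin (sndIn (R.backClosure w)) d := by
  intro d hd
  induction d with
  | zero => simpa using M.subset_start _ (hτ.mem_cut 0 hd)
  | succ d ih =>
    intro x hx
    have hd' : d < w.length := hd
    have hτd := apply_firstIndex (M.range_usableRight hd' ▸ hτ.mem_cut (d + 1) hd)
    obtain ⟨q, hq, y, hy, hstep⟩ := exists_pred_of_mem_usable_succ (M.pos_lt hd')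
      (show x ∈ M.usableRight d _ from hτd ▸ hx)
    exact NFA.mem_reachWithin_succ.mpr
      ⟨q, ih hd'.le (hτ.prev_subset d hd' hq), y, hstage d hd' hy, hstep⟩

theorem IsSection.subset_coreachWithin (hτ : M.IsSection τ)
    (hstage : ∀ d < w.length, R.backStage (M.word d) (firstIndex (M.usableLeft d) (τ d))
      (M.pos d) ⊆ R.backClosure w d) :
    ∀ d ≤ w.length, τ d ⊆ R.T.coreachWithin (sndIn (R.backClosure w)) w.length d := by
  intro d hd
  induction hd using Nat.decreasingInduction with
  | self => simpa [NFA.coreachWithin_self] using M.subset_accept _ (hτ.mem_cut _ le_rfl)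
  | of_succ d hd' ih =>
    intro x hx
    have hτd := apply_firstIndex (M.range_usableLeft hd' ▸ hτ.mem_cut d hd'.le)
    obtain ⟨y, hy, q', hstep, hq'⟩ := exists_succ_of_mem_usable (M.pos_lt hd')
      (show x ∈ M.usableLeft d _ from hτd ▸ hx)
    exact (NFA.mem_coreachWithin_iff hd').mpr
      ⟨y, hstage d hd' hy, q', hstep, ih (hτ.next_subset d hd' hq')⟩

noncomputable def weight (τ : ℕ → Set QT) : ℕ :=
  ∑ d ∈ Finset.range (w.length + 1), levelIn (M.cut d) (τ d)

variable [Finite QT]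

theorem weight_lt_weight {σ τ : ℕ → Set QT} (hle : ∀ d ≤ w.length, σ d ⊆ τ d)
    (hd : d ≤ w.length) (hmem : σ d ∈ M.cut d) (hne : σ d ≠ τ d) :
    M.weight σ < M.weight τ :=
  Finset.sum_lt_sum
    (fun d hd => levelIn_mono (hle d (Nat.lt_succ_iff.mp (Finset.mem_range.mp hd))))
    ⟨d, Finset.mem_range.mpr (Nat.lt_succ_of_le hd),
      levelIn_lt_levelIn hmem ((hle d hd).ssubset_of_ne hne)⟩

/-- Induction on the weight of `τ`: a letter needed to extend a run across column `m` was
produced in an earlier round of that column, whose section lies strictly below `τ`. -/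
theorem IsSection.subset_reachWithin_inter_coreachWithin (hτ : M.IsSection τ) :
    ∀ d ≤ w.length, τ d ⊆ R.T.reachWithin (sndIn (R.backClosure w)) d ∩
      R.T.coreachWithin (sndIn (R.backClosure w)) w.length d := by
  induction hn : M.weight τ using Nat.strong_induction_on generalizing τ with
  | _ n ih =>
  have hstage : ∀ m < w.length, ∀ t, (∀ s < t, M.weight (M.spread m s) < n) →
      R.backStage (M.word m) t (M.pos m) ⊆ R.backClosure w m := fun m hm t ht =>
    M.backStage_word_subset_backClosure hm t fun s hs =>
      ih _ (ht s hs) (M.isSection_spread hm s) rfl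
  refine fun d hd => subset_inter (hτ.subset_reachWithin M (fun m hm => hstage m hm _ ?_) d hd)
    (hτ.subset_coreachWithin M (fun m hm => hstage m hm _ ?_) d hd)
  · intro s hs
    have hτm := M.range_usableRight hm ▸ hτ.mem_cut (m + 1) hm
    have hlt := lt_of_lt_firstIndex (M.usableRight_mono m) hτm hs
    rw [← hn]
    refine M.weight_lt_weight (M.spread_subset hτ hm ?_ ?_) hm
      ((M.isSection_spread hm s).mem_cut _ hm) (M.spread_succ_self m s ▸ hlt.ne)
    · exact (M.usableLeft_mono m hs.le).trans (hτ.prev_subset m hm)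
    · exact hlt.le
  · intro s hs
    have hτm := M.range_usableLeft hm ▸ hτ.mem_cut m hm.le
    have hlt := lt_of_lt_firstIndex (M.usableLeft_mono m) hτm hs
    rw [← hn]
    refine M.weight_lt_weight (M.spread_subset hτ hm hlt.le ?_) hm.le
      ((M.isSection_spread hm s).mem_cut _ hm.le) (M.spread_self m s ▸ hlt.ne)
    exact (M.usableRight_mono m hs.le).trans (hτ.next_subset m hm)

theorem backClosure_word_subset {c : ℕ} (hc : c < w.length) :
    R.backClosure (M.word c) (M.pos c) ⊆ R.backClosure w c :=
  iUnion_subset fun t => M.backStage_word_subset_backClosure hc t fun s _ =>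
    (M.isSection_spread hc s).subset_reachWithin_inter_coreachWithin

end Mosaic

variable (R)

/-- Reads the pairs `(w[c], u[c])`, guessing at every position a word `v` and a position `k`
with `v[k] = w[c]` from which `u[c]` is derived; the states are the chains of usable sets. -/
def coverNFA : NFA (Sig × Sig) (SetChain QT) where
  step F x := {F' | ∃ (v : List Sig) (k : ℕ), v[k]? = some x.1 ∧ x.2 ∈ R.backClosure v k ∧
    F = R.chainAt v k ∧ F' = R.chainAt v (k + 1)}
  start := range fun v => R.chainAt v 0
  accept := range fun v => R.chainAt v v.length

variable {R}

theorem covered_of_zip_mem_coverNFA_accepts [Finite QT] {w u : List Sig}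
    (hlen : u.length = w.length) (h : w.zip u ∈ R.coverNFA.accepts) :
    Covered (R.backClosure w) 0 u := by
  have hzip : (w.zip u).length = w.length := by simp [hlen]
  obtain ⟨g, ⟨v₀, hv₀ : R.chainAt v₀ 0 = g 0⟩, ⟨v₁, hv₁ : R.chainAt v₁ _ = g _⟩, hg⟩ :=
    NFA.mem_accepts_iff_exists_run.mp h
  rw [hzip] at hv₁
  have hcol : ∀ c, ∃ (v : List Sig) (k : ℕ), ∀ hc : c < w.length, v[k]? = some w[c] ∧
      u[c] ∈ R.backClosure v k ∧ g c = R.chainAt v k ∧ g (c + 1) = R.chainAt v (k + 1) := by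
    intro c
    by_cases hc : c < w.length
    · obtain ⟨v, k, hv⟩ := hg c (hzip ▸ hc)
      exact ⟨v, k, fun _ => by simpa [List.getElem_zip] using hv⟩
    · exact ⟨[], 0, fun h => absurd h hc⟩
  choose v k hvk using hcol
  let M : Mosaic R w :=
    { word := v
      pos := k
      cut := fun c => (g c).1
      getElem?_word := fun c hc => (hvk c hc).1
      fam_pos := fun c hc => by rw [(hvk c hc).2.2.1]; rfl
      fam_pos_succ := fun c hc => by rw [(hvk c hc).2.2.2]; rfl
      subset_start := fun V hV =>
        subset_start_of_mem_fam_zero (w := v₀) (show V ∈ (R.chainAt v₀ 0).1 by rwa [hv₀])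
      subset_accept := fun V hV => subset_accept_of_mem_fam_length
        (show V ∈ (R.chainAt v₁ v₁.length).1 by rwa [hv₁]) }
  intro c hc
  have hc' : c < w.length := hlen ▸ hc
  simpa using M.backClosure_word_subset hc' (hvk c hc').2.1

theorem zip_mem_coverNFA_accepts [Finite QT] {w u : List Sig} (hlen : u.length = w.length) :
    w.zip u ∈ R.coverNFA.accepts ↔ Covered (R.backClosure w) 0 u := by
  refine ⟨covered_of_zip_mem_coverNFA_accepts hlen, fun hcov => ?_⟩
  have hzip : (w.zip u).length = w.length := by simp [hlen]
  refine NFA.mem_accepts_iff_exists_run.mpr ⟨R.chainAt w, ⟨w, rfl⟩, ⟨w, by rw [hzip]⟩,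
    fun c hc => ⟨w, c, ?_, ?_, rfl, rfl⟩⟩
  · simp [List.getElem_zip]
  · simpa [List.getElem_zip] using hcov c (by omega)

end RTS

theorem add_two_pow_succ_le (n : ℕ) : (n + 2) ^ (n + 1) ≤ (n + 1) ^ n * 2 ^ n * 2 ^ n * 2 := by
  calc (n + 2) ^ (n + 1) = (n + 2) ^ n * (n + 2) := pow_succ _ _
    _ ≤ ((n + 1) * 2) ^ n * (2 ^ n * 2) :=
        Nat.mul_le_mul (Nat.pow_le_pow_left (by omega) n)
          (by have := Nat.lt_two_pow_self (n := n + 1); rw [pow_succ] at this; omega)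
    _ = (n + 1) ^ n * 2 ^ n * 2 ^ n * 2 := by rw [mul_pow]; ring

theorem nfa_for_Ind1_general
    {Sig QI QT : Type} [Fintype QI] [Fintype QT]
    (R : RTS Sig QI QT) :
    ∃ (Q : Type) (_ : Fintype Q) (A : NFA Sig Q),
      Fintype.card Q ≤
        (Fintype.card QT + 1) ^ (Fintype.card QT) * 2 ^ (Fintype.card QT) *
          2 ^ (Fintype.card QT) * 2 * Fintype.card QI ∧
      A.accepts = Ind1 R := by
  refine ⟨SetChain QT × QI, inferInstance, R.coverNFA.relPreimage R.I, ?_, ?_⟩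
  · rw [Fintype.card_prod]
    exact Nat.mul_le_mul_right _ (card_setChain_le.trans (add_two_pow_succ_le _))
  · ext w
    simp only [NFA.mem_relPreimage_accepts, Ind1, RTS.potReach1_iff]
    exact exists_congr fun u => and_congr_right fun _ =>
      and_congr_right RTS.zip_mem_coverNFA_accepts

/-- Theorem `thm:autforInd1`: there is an NFA over `Σ` with at
most `(n_T + 1)^(n_T) · 2^(n_T) · 2^(n_T) · 2 · n_I` states recognizing exactly
`Ind_1(R)`. -/
theorem nfa_for_Ind1
    {Sig QI QT : Type} [Fintype Sig] [Fintype QI] [Fintype QT]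
    (R : RTS Sig QI QT) :
    ∃ (Q : Type) (_ : Fintype Q) (A : NFA Sig Q),
      Fintype.card Q ≤
        (Fintype.card QT + 1) ^ (Fintype.card QT) * 2 ^ (Fintype.card QT) *
          2 ^ (Fintype.card QT) * 2 * Fintype.card QI ∧
      A.accepts = Ind1 R :=
  nfa_for_Ind1_general R
end

section
/- For every b ≥ 1 there exists a regular transition system R_b over the two-letter alphabet {0,1} such that Reach(R_b) = 0* = Ind_{b+1}(R_b), and Ind_b(R_b) strictly contains Reach(R_b); in particular, the configuration 0^b·1 belongs to Ind_b(R_b) but not to Reach(R_b). -/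
/-- The language `0*` over the two-letter alphabet `{0,1}` (encoded as `Bool`,
with `0 = false` and `1 = true`). -/
def Zeros : Set (List Bool) := { w | ∀ a ∈ w, a = false }

/-!
`R_b` starts from `0*` and lets every word of length `b + 1` that contains a `1` move to every
word of length `b + 1`; nothing moves from `0*`, so `Reach(R_b) = 0*`.

A word `w` containing a `1` at position `p` is cut off by an inductive `(b+1)`-formula satisfied
by `0*`: at length `b + 1` by "position `i` is `0`" for each of the `b + 1` clauses `i` (only
`0^(b+1)` satisfies it, and it has no successor), at any other length by "position `p` is `0`"
(no transitions at that length).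

With only `b` clauses this fails: an inductive `b`-formula satisfied by `0^(b+1)` is, by
pigeonhole on the clauses, satisfied by one of the `b + 1` words of length `b + 1` with a single
`1`, and each of these moves to `0^b 1`.
-/

namespace RTS

variable {Sig QI QT : Type} (R : RTS Sig QI QT)

theorem reach_subset_ind (c : ℕ) : R.Reach ⊆ Ind c R := by
  rintro w ⟨u, hu, hreach⟩
  refine ⟨u, hu, fun φ hφ hsat => ?_⟩
  induction hreach with
  | refl => exact hsat
  | tail _ hstep ih => exact hφ _ _ ih hstep

theorem reach_eq_of_forall_not_step (h : ∀ w ∈ R.I.accepts, ∀ u, ¬ R.Step w u) :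
    R.Reach = R.I.accepts := by
  refine subset_antisymm ?_ fun w hw => ⟨w, hw, .refl⟩
  rintro w ⟨u, hu, hreach⟩
  induction hreach with
  | refl => exact hu
  | tail _ hstep ih => exact absurd hstep (h _ ih _)

theorem not_mem_ind_of_isInductiveBFormula {c : ℕ} {φ : BFormula Sig c}
    (hφ : IsInductiveBFormula R φ) (hI : ∀ u ∈ R.I.accepts, BSat u φ) {w : List Sig}
    (hw : ¬ BSat w φ) : w ∉ Ind c R :=
  fun ⟨u, hu, hpot⟩ => hw (hpot φ hφ (hI u hu))

end RTS

namespace BFormula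

variable {Sig : Type}

def letterAt {c : ℕ} (ℓ : ℕ) (pos : Fin c → ℕ) (a : Sig) : BFormula Sig c :=
  List.ofFn fun x : Fin ℓ => fun i => if (x : ℕ) = pos i then {a} else ∅

theorem bsat_letterAt_iff {c ℓ : ℕ} {pos : Fin c → ℕ} {a : Sig} {w : List Sig}
    (hw : w.length = ℓ) : BSat w (letterAt ℓ pos a) ↔ ∀ i, w[pos i]? = some a := by
  subst hw
  simp [BSat, letterAt, List.getElem?_eq_some_iff]

/-- Pigeonhole: if every `v j` failed `φ`, two of them would fail the same clause; `u` satisfies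
that clause at some position, and one of the two agrees with `u` there. -/
theorem exists_bsat_of_agree_off {b : ℕ} {φ : BFormula Sig b} {u : List Sig}
    (hu : ∀ i, ∃ (x : ℕ) (h₁ : x < u.length) (h₂ : x < φ.length),
      u.get ⟨x, h₁⟩ ∈ φ.get ⟨x, h₂⟩ i)
    (v : Fin (b + 1) → List Sig)
    (hv : ∀ (j : Fin (b + 1)) (x : ℕ), x ≠ j → (v j)[x]? = u[x]?) :
    ∃ j, BSat (v j) φ := by
  by_contra! hfail
  have hclause : ∀ j, ∃ i, ∀ (x : ℕ) (h₁ : x < (v j).length) (h₂ : x < φ.length),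
      (v j).get ⟨x, h₁⟩ ∉ φ.get ⟨x, h₂⟩ i := by
    intro j
    have := hfail j
    rw [BSat] at this
    push Not at this
    exact this.2
  choose c hc using hclause
  obtain ⟨j, j', hne, hc_eq⟩ := Fintype.exists_ne_map_eq_of_card_lt c (by simp)
  obtain ⟨x, h₁, h₂, hx⟩ := hu (c j)
  obtain ⟨k, hxk, hck⟩ : ∃ k : Fin (b + 1), x ≠ k ∧ c k = c j := by
    by_cases hxj : x = j
    · exact ⟨j', fun h => hne (Fin.ext (hxj.symm.trans h)), hc_eq.symm⟩
    · exact ⟨j, hxj, rfl⟩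
  obtain ⟨hxv, hget⟩ :=
    List.getElem?_eq_some_iff.mp ((hv k x hxk).trans (List.getElem?_eq_getElem h₁))
  exact hc k x hxv h₂ (by rw [hck]; simpa [hget] using hx)

end BFormula

@[simps]
def zerosDFA : DFA Bool Bool where
  step s a := s && !a
  start := true
  accept := {true}

theorem zerosDFA_evalFrom (s : Bool) (x : List Bool) :
    zerosDFA.evalFrom s x = (s && x.all (!·)) := by
  induction x generalizing s with
  | nil => simp
  | cons a x ih => simp [ih, Bool.and_assoc]

theorem mem_zerosDFA_accepts {x : List Bool} : x ∈ zerosDFA.accepts ↔ x ∈ Zeros := by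
  simp [DFA.mem_accepts, DFA.eval, zerosDFA_evalFrom, Zeros]

/-- Counts letters, saturating at `n + 1`, which stands for "more than `n`". -/
def lengthDFA (α : Type) (n : ℕ) : DFA α (Fin (n + 2)) where
  step k _ := ⟨min (k + 1) (n + 1), by omega⟩
  start := 0
  accept := {⟨n, by omega⟩}

theorem lengthDFA_evalFrom {α : Type} (n : ℕ) (k : Fin (n + 2)) (x : List α) :
    ((lengthDFA α n).evalFrom k x : ℕ) = min (k + x.length) (n + 1) := by
  induction x generalizing k with
  | nil => simp; omega
  | cons a x ih =>
    rw [DFA.evalFrom_cons, ih]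
    simp only [lengthDFA, List.length_cons]
    omega

theorem mem_lengthDFA_accepts {α : Type} {n : ℕ} {x : List α} :
    x ∈ (lengthDFA α n).accepts ↔ x.length = n := by
  change (lengthDFA α n).evalFrom 0 x = ⟨n, by omega⟩ ↔ x.length = n
  rw [Fin.ext_iff, lengthDFA_evalFrom]
  simp only [Fin.val_zero, zero_add]
  omega

theorem BFormula.bsat_letterAt_false_of_mem_zeros {c ℓ : ℕ} {pos : Fin c → ℕ}
    (hpos : ∀ i, pos i < ℓ) {u : List Bool} (hu : u ∈ Zeros) :
    BSat u (BFormula.letterAt ℓ pos false) := by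
  by_cases hlen : u.length = ℓ
  · rw [BFormula.bsat_letterAt_iff hlen]
    intro i
    rw [List.getElem?_eq_getElem (hlen ▸ hpos i)]
    exact congrArg some (hu _ (List.getElem_mem _))
  · exact Or.inl (by simpa [BFormula.letterAt] using hlen)

theorem mem_zeros_of_bsat_letterAt_val {n ℓ : ℕ} (hℓ : ℓ ≤ n) {w : List Bool}
    (hw : w.length = ℓ) (hsat : BSat w (BFormula.letterAt ℓ (Fin.val : Fin n → ℕ) false)) :
    w ∈ Zeros := by
  rw [BFormula.bsat_letterAt_iff hw] at hsat
  intro a ha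
  obtain ⟨p, hp, rfl⟩ := List.getElem_of_mem ha
  simpa [List.getElem?_eq_getElem hp] using hsat ⟨p, by omega⟩

theorem exists_getElem?_eq_true_of_not_mem_zeros {w : List Bool} (hw : w ∉ Zeros) :
    ∃ p : ℕ, w[p]? = some true := by
  simp only [Zeros, Set.mem_ofPred_eq, not_forall, Bool.not_eq_false] at hw
  obtain ⟨a, ha, rfl⟩ := hw
  exact List.mem_iff_getElem?.mp ha

def ladderRTS (b : ℕ) : RTS Bool Bool (Fin (b + 3) × Bool) :=
  ⟨zerosDFA.toNFA, ((lengthDFA _ (b + 1)).inter (zerosDFA.comap Prod.fst)ᶜ).toNFA⟩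

theorem ladderRTS_step_iff {b : ℕ} {w u : List Bool} :
    (ladderRTS b).Step w u ↔ w.length = u.length ∧ w.length = b + 1 ∧ w ∉ Zeros := by
  refine and_congr_right fun hwu => ?_
  rw [ladderRTS, DFA.toNFA_correct, DFA.accepts_inter, Language.mem_inf, mem_lengthDFA_accepts,
    DFA.accepts_compl, DFA.accepts_comap]
  change _ ∧ ¬ (List.map Prod.fst (w.zip u) ∈ zerosDFA.accepts) ↔ _
  rw [List.length_zip, ← hwu, Nat.min_self, List.map_fst_zip hwu.le, mem_zerosDFA_accepts]

namespace ladderRTS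

variable {b : ℕ}

theorem mem_initial_iff {w : List Bool} : w ∈ (ladderRTS b).I.accepts ↔ w ∈ Zeros := by
  rw [ladderRTS, DFA.toNFA_correct, mem_zerosDFA_accepts]

theorem reach_eq : (ladderRTS b).Reach = Zeros := by
  rw [RTS.reach_eq_of_forall_not_step]
  · exact Set.ext fun _ => mem_initial_iff
  · exact fun w hw u hstep => (ladderRTS_step_iff.mp hstep).2.2 (mem_initial_iff.mp hw)

theorem isInductiveBFormula {c : ℕ} {φ : BFormula Bool c}
    (h : φ.length = b + 1 → ∀ w : List Bool, w.length = b + 1 → BSat w φ → w ∈ Zeros) :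
    IsInductiveBFormula (ladderRTS b) φ := by
  intro w u hsat hstep
  obtain ⟨hwu, hw, hwz⟩ := ladderRTS_step_iff.mp hstep
  by_cases hφ : φ.length = b + 1
  · exact absurd (h hφ w hw hsat) hwz
  · exact Or.inl (by omega)

theorem ind_succ_eq : Ind (b + 1) (ladderRTS b) = Zeros := by
  refine subset_antisymm (fun w hw => ?_) (reach_eq ▸ RTS.reach_subset_ind _ _)
  by_contra hwz
  obtain ⟨p, hp⟩ := exists_getElem?_eq_true_of_not_mem_zeros hwz
  have hpw : p < w.length := (List.getElem?_eq_some_iff.mp hp).1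
  have hI : ∀ {pos : Fin (b + 1) → ℕ}, (∀ i, pos i < w.length) →
      ∀ u ∈ (ladderRTS b).I.accepts, BSat u (BFormula.letterAt w.length pos false) :=
    fun hpos u hu => BFormula.bsat_letterAt_false_of_mem_zeros hpos (mem_initial_iff.mp hu)
  by_cases hlen : w.length = b + 1
  · refine RTS.not_mem_ind_of_isInductiveBFormula _
      (isInductiveBFormula fun _ v hv =>
        mem_zeros_of_bsat_letterAt_val hlen.le (hv.trans hlen.symm))
      (hI fun i => by omega) ?_ hw
    rw [BFormula.bsat_letterAt_iff rfl]
    exact fun h => by simpa [hp] using h ⟨p, hlen ▸ hpw⟩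
  · refine RTS.not_mem_ind_of_isInductiveBFormula _
      (isInductiveBFormula fun hφ => absurd (by simpa [BFormula.letterAt] using hφ) hlen)
      (hI fun _ => hpw) ?_ hw
    rw [BFormula.bsat_letterAt_iff rfl]
    exact fun h => by simpa [hp] using h 0

theorem witness_mem_ind : List.replicate b false ++ [true] ∈ Ind b (ladderRTS b) := by
  refine ⟨List.replicate (b + 1) false,
    mem_initial_iff.mpr fun _ => List.eq_of_mem_replicate, fun φ hφ hsat => ?_⟩
  by_cases hlen : (List.replicate b false ++ [true]).length = φ.length
  swap
  · exact Or.inl hlen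
  let e : Fin (b + 1) → List Bool := fun j => (List.replicate (b + 1) false).set j true
  obtain ⟨j, hj⟩ := BFormula.exists_bsat_of_agree_off
    (hsat.resolve_left (by simpa using hlen)) e fun j x hx => by simp [e, Ne.symm hx]
  have hej : e j ∉ Zeros := fun h => by
    simpa using h true (List.mem_iff_getElem.mpr ⟨j, by simp [e]; omega, by simp [e]⟩)
  exact hφ _ _ hj (ladderRTS_step_iff.mpr ⟨by simp [e], by simp [e], hej⟩)

theorem witness_not_mem_reach : List.replicate b false ++ [true] ∉ (ladderRTS b).Reach := by
  rw [reach_eq]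
  exact fun h => by simpa using h true (by simp)

end ladderRTS

/-- Example `ex:ladder`: for every `b ≥ 1` there is an RTS `R_b`
over `{0,1}` with `Reach(R_b) = 0* = Ind_{b+1}(R_b)` and
`Reach(R_b) ⊊ Ind_b(R_b)`; in particular `0^b · 1 ∈ Ind_b(R_b) \ Reach(R_b)`. -/
theorem exists_rts_with_Ind_gap :
    ∀ b : ℕ, 1 ≤ b →
      ∃ (QI QT : Type) (_ : Fintype QI) (_ : Fintype QT) (R : RTS Bool QI QT),
        R.Reach = Zeros ∧
        Ind (b + 1) R = Zeros ∧
        R.Reach ⊂ Ind b R ∧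
        (List.replicate b false ++ [true]) ∈ Ind b R ∧
        (List.replicate b false ++ [true]) ∉ R.Reach := by
  intro b _
  refine ⟨_, _, inferInstance, inferInstance, ladderRTS b, ladderRTS.reach_eq,
    ladderRTS.ind_succ_eq, ?_, ladderRTS.witness_mem_ind, ladderRTS.witness_not_mem_reach⟩
  exact (Set.ssubset_iff_of_subset (RTS.reach_subset_ind _ b)).mpr
    ⟨_, ladderRTS.witness_mem_ind, ladderRTS.witness_not_mem_reach⟩
end

section
/- There exists a regular transition system R over the two-letter alphabet {0,1} such that Reach(R) = 0* (in particular Reach(R) is a regular language), and yet Ind_b(R) ≠ Reach(R) for every b ≥ 1. -/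
/-!
The system starts in `0*` and lets a configuration containing a `1` jump to any configuration of
the same length, so nothing outside `0*` is reachable. A `b`-formula satisfied by `0^(b+1)` is
witnessed at no more than `b` positions, so turning a letter at a remaining position into `1`
keeps it satisfied; if the formula is inductive it then holds at every successor of that word,
in particular at `1^(b+1)`. Hence `1^(b+1) ∈ Ind_b`.
-/

def seenDFA {α : Type} (p : α → Bool) (acc : Set Bool) : DFA α Bool where
  step s a := s || p a
  start := false
  accept := acc

theorem seenDFA_evalFrom {α : Type} (p : α → Bool) (acc : Set Bool) (s : Bool) (x : List α) :
    (seenDFA p acc).evalFrom s x = (s || x.any p) := by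
  induction x generalizing s with
  | nil => simp
  | cons a x ih => rw [DFA.evalFrom_cons, ih, List.any_cons, ← Bool.or_assoc]; rfl

theorem seenDFA_toNFA_mem_accepts {α : Type} (p : α → Bool) (acc : Set Bool) (x : List α) :
    x ∈ (seenDFA p acc).toNFA.accepts ↔ x.any p ∈ acc := by
  rw [DFA.toNFA_correct, DFA.mem_accepts, DFA.eval, seenDFA_evalFrom]
  rfl

def zerosRTS : RTS Bool Bool Bool :=
  ⟨(seenDFA id {false}).toNFA, (seenDFA Prod.fst {true}).toNFA⟩

theorem zerosRTS_mem_accepts (x : List Bool) : x ∈ zerosRTS.I.accepts ↔ x ∈ Zeros := by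
  rw [zerosRTS, seenDFA_toNFA_mem_accepts]
  simp [Zeros]

theorem zerosRTS_step (w u : List Bool) :
    zerosRTS.Step w u ↔ w.length = u.length ∧ true ∈ w := by
  refine and_congr_right fun hlen => ?_
  rw [zerosRTS, seenDFA_toNFA_mem_accepts, Set.mem_singleton_iff,
    show (w.zip u).any Prod.fst = ((w.zip u).map Prod.fst).any id by simp,
    List.map_fst_zip hlen.le]
  simp

theorem RTS.reach_subset_of_isInductiveSet {Sig QI QT : Type} (R : RTS Sig QI QT)
    {S : Set (List Sig)} (hI : ∀ x ∈ R.I.accepts, x ∈ S) (hS : IsInductiveSet R S) :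
    R.Reach ⊆ S := by
  rintro w ⟨u, hu, hreach⟩
  induction hreach with
  | refl => exact hI u hu
  | tail _ hstep ih => exact hS _ ih _ hstep

theorem zerosRTS_reach : zerosRTS.Reach = Zeros := by
  refine (RTS.reach_subset_of_isInductiveSet _ (fun x => (zerosRTS_mem_accepts x).1)
    fun w hw u hstep => ?_).antisymm fun w hw => ⟨w, (zerosRTS_mem_accepts w).2 hw, .refl⟩
  exact absurd (hw true ((zerosRTS_step w u).1 hstep).2) (by decide)

theorem BSat.exists_forall_set {Sig : Type} {b : ℕ} {w : List Sig} {φ : BFormula Sig b}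
    (hw : BSat w φ) (hb : b < w.length) : ∃ p < w.length, ∀ a, BSat (w.set p a) φ := by
  rcases hw with hlen | hw
  · exact ⟨0, by omega, fun a => Or.inl (by rwa [List.length_set])⟩
  choose j hj₁ hj₂ hj using hw
  obtain ⟨p, hp⟩ : ∃ p : Fin w.length, ∀ i, (⟨j i, hj₁ i⟩ : Fin w.length) ≠ p := by
    by_contra! hsurj
    have := Fintype.card_le_of_surjective (fun i => (⟨j i, hj₁ i⟩ : Fin w.length)) hsurj
    simp only [Fintype.card_fin] at this
    omega
  refine ⟨p, p.2, fun a => Or.inr fun i => ⟨j i, by simpa using hj₁ i, hj₂ i, ?_⟩⟩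
  have hne : p.1 ≠ j i := fun h => hp i (Fin.ext h.symm)
  simpa [List.getElem_set_ne hne] using hj i

theorem mem_ind_of_forall_set_step {Sig QI QT : Type} {b : ℕ} {R : RTS Sig QI QT}
    {u w : List Sig} (hu : u ∈ R.I.accepts) (hb : b < u.length)
    (hstep : ∀ p < u.length, ∃ a, R.Step (u.set p a) w) : w ∈ Ind b R := by
  refine ⟨u, hu, fun φ hφ hsat => ?_⟩
  obtain ⟨p, hp, hsat_set⟩ := hsat.exists_forall_set hb
  obtain ⟨a, hpa⟩ := hstep p hp
  exact hφ _ _ (hsat_set a) hpa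

theorem replicate_true_mem_ind_zerosRTS (b : ℕ) :
    List.replicate (b + 1) true ∈ Ind b zerosRTS := by
  refine mem_ind_of_forall_set_step (u := List.replicate (b + 1) false)
    ((zerosRTS_mem_accepts _).2 fun a ha => (List.mem_replicate.1 ha).2) (by simp)
    fun p hp => ⟨true, (zerosRTS_step _ _).2 ⟨by simp, List.mem_set hp _⟩⟩

/-- Example `ex:ladder2`: there is an RTS `R` over `{0,1}` with
`Reach(R) = 0*` (a regular language), yet `Ind_b(R) ≠ Reach(R)` for every
`b ≥ 1`. -/
theorem exists_rts_regular_reach_never_attained :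
    ∃ (QI QT : Type) (_ : Fintype QI) (_ : Fintype QT) (R : RTS Bool QI QT),
      R.Reach = Zeros ∧ ∀ b : ℕ, 1 ≤ b → Ind b R ≠ R.Reach := by
  refine ⟨Bool, Bool, inferInstance, inferInstance, zerosRTS, zerosRTS_reach, fun b _ hb => ?_⟩
  have hmem := replicate_true_mem_ind_zerosRTS b
  rw [hb, zerosRTS_reach] at hmem
  exact absurd (hmem true (List.mem_replicate.2 ⟨b.succ_ne_zero, rfl⟩)) (by decide)
end

section
/- Let R = (Σ, I, T) be a regular transition system and let w, z be configurations. Let τ_w and τ_z be fragment separation refinements for w and z respectively, such that the first-appearance list of outgoing states of τ_w equals the first-appearance list of incoming states of τ_z. Then there exists a fragment separation refinement τ_{wz} for the concatenation w·z such that: at every position, the set of used source letters of the column of τ_{wz} equals the set of used source letters of the corresponding column of τ_w or τ_z; the first-appearance list of incoming states of τ_{wz} equals that of τ_w; and the first-appearance list of outgoing states of τ_{wz} equals that of τ_z. -/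
/-- A row: a transition `(q, (a,b), q')` of the transducer. -/
abbrev Row (Sig QT : Type) := QT × (Sig × Sig) × QT

/-- A column: a finite sequence of rows. -/
abbrev Column (Sig QT : Type) := List (Row Sig QT)

/-- A local separation refinement for a letter `c`: a sequence of transitions
`(q_i, (a_i, b_i), q_i')` of the transducer such that for every `i`, either
`b_i = c` or `b_i = a_{i'}` for some `i' < i`. -/
def IsLSR {Sig QT : Type} (T : NFA (Sig × Sig) QT) (c : Sig)
    (col : Column Sig QT) : Prop :=
  (∀ r ∈ col, r.2.2 ∈ T.step r.1 r.2.1) ∧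
  ∀ (i : ℕ) (h : i < col.length),
    (col.get ⟨i, h⟩).2.1.2 = c ∨
      ∃ (i' : ℕ) (h' : i' < col.length), i' < i ∧
        (col.get ⟨i, h⟩).2.1.2 = (col.get ⟨i', h'⟩).2.1.1

/-- The set of used source letters of a column. -/
def usedLetters {Sig QT : Type} (col : Column Sig QT) : Set Sig :=
  { a | ∃ r ∈ col, r.2.1.1 = a }

/-- The sequence of incoming states of a column. -/
def incoming {Sig QT : Type} (col : Column Sig QT) : List QT :=
  col.map (fun r => r.1)

/-- The sequence of outgoing states of a column. -/
def outgoing {Sig QT : Type} (col : Column Sig QT) : List QT :=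
  col.map (fun r => r.2.2)

/-- The first-appearance list of a sequence of states: keep only the first
occurrence of each state. -/
def firstAppear {QT : Type} [DecidableEq QT] : List QT → List QT
  | [] => []
  | a :: l => a :: (firstAppear l).filter (· ≠ a)

/-- A fragment separation refinement for a word `w`: a table with `|w|` columns,
the `j`-th column being a local separation refinement for `w[j]`, all columns of
the same length, and the outgoing states of each column equal (position-wise) to
the incoming states of the next column. -/
def IsFSR {Sig QI QT : Type} (R : RTS Sig QI QT) (w : List Sig)
    (F : List (Column Sig QT)) : Prop :=
  F.length = w.length ∧
  (∀ (j : ℕ) (h : j < F.length) (hw : j < w.length),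
    IsLSR R.T (w.get ⟨j, hw⟩) (F.get ⟨j, h⟩)) ∧
  (∀ c ∈ F, ∀ c' ∈ F, c.length = c'.length) ∧
  (∀ (j : ℕ) (h : j + 1 < F.length),
    outgoing (F.get ⟨j, Nat.lt_of_succ_lt h⟩) = incoming (F.get ⟨j + 1, h⟩))

/-- The incoming states of a fragment separation refinement (those of its first
column). -/
def fIncoming {Sig QT : Type} (F : List (Column Sig QT)) : List QT :=
  incoming (F.headD [])

/-- The outgoing states of a fragment separation refinement (those of its last
column). -/
def fOutgoing {Sig QT : Type} (F : List (Column Sig QT)) : List QT :=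
  outgoing (F.getLast?.getD [])

/-!
Let `A` be the outgoing states of the last column of `τ_w` and `B` the incoming states of the
first column of `τ_z`. Since `A` and `B` have the same first-appearance list, a merge of the two
lists from the back yields index sequences `σ`, `τ` with `A ∘ σ = B ∘ τ`, each of them a
restricted growth sequence: it hits every row, and a row index shows up only after all smaller
ones. Re-indexing every column of `τ_w` along `σ` and of `τ_z` along `τ` then glues the two
tables. It keeps every column a local separation refinement, because a row referring to an
earlier row `i'` still finds a copy of row `i'` before it; it keeps the used letters, because no
row is lost; and it keeps first-appearance lists, because new rows appear in their original
order.
-/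

section FirstAppear

variable {α : Type} [DecidableEq α]

theorem mem_firstAppear {a : α} {l : List α} : a ∈ firstAppear l ↔ a ∈ l := by
  induction l with
  | nil => simp [firstAppear]
  | cons b l ih => by_cases h : a = b <;> simp [firstAppear, ih, h]

theorem firstAppear_eq_nil {l : List α} : firstAppear l = [] ↔ l = [] := by
  cases l <;> simp [firstAppear]

theorem firstAppear_append (l m : List α) :
    firstAppear (l ++ m) = firstAppear l ++ (firstAppear m).filter (· ∉ l) := by
  induction l with
  | nil => simp [firstAppear]
  | cons b l ih => simp [firstAppear, ih, List.filter_filter]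

theorem firstAppear_append_of_subset {l m : List α} (h : m ⊆ l) :
    firstAppear (l ++ m) = firstAppear l := by
  rw [firstAppear_append, List.filter_eq_nil_iff.2, List.append_nil]
  intro x hx
  simpa using h (mem_firstAppear.1 hx)

theorem firstAppear_append_singleton_of_notMem {l : List α} {a : α} (h : a ∉ l) :
    firstAppear (l ++ [a]) = firstAppear l ++ [a] := by
  simp [firstAppear_append, firstAppear, h]

theorem firstAppear_append_congr {l₁ l₂ : List α} (h : firstAppear l₁ = firstAppear l₂)
    (m : List α) : firstAppear (l₁ ++ m) = firstAppear (l₂ ++ m) := by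
  have hmem : ∀ x, x ∈ l₁ ↔ x ∈ l₂ := fun x => by
    rw [← mem_firstAppear, h, mem_firstAppear]
  simp only [firstAppear_append, h, hmem]

end FirstAppear

/-- `L[σ[0]], L[σ[1]], …`, silently skipping the indices out of range. -/
def pick {β : Type*} (σ : List ℕ) (L : List β) : List β :=
  σ.filterMap (L[·]?)

section Pick

variable {β γ : Type*}

@[simp]
theorem pick_nil_right (σ : List ℕ) : pick σ ([] : List β) = [] := by
  simp [pick]

theorem mem_pick {σ : List ℕ} {L : List β} {b : β} : b ∈ pick σ L ↔ ∃ i ∈ σ, L[i]? = some b :=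
  List.mem_filterMap

theorem pick_append_singleton (σ : List ℕ) (L : List β) (i : ℕ) :
    pick (σ ++ [i]) L = pick σ L ++ L[i]?.toList := by
  cases h : L[i]? <;> simp [pick, h]

theorem pick_map (σ : List ℕ) (L : List β) (f : β → γ) :
    pick σ (L.map f) = (pick σ L).map f := by
  simp [pick, List.map_filterMap]

end Pick

/-- `RestrictedGrowth n σ`: the entries of `σ` are exactly the indices `< n`, and each index
first occurs after all smaller ones. -/
inductive RestrictedGrowth : ℕ → List ℕ → Prop
  | nil : RestrictedGrowth 0 []
  | fresh {n σ} : RestrictedGrowth n σ → RestrictedGrowth (n + 1) (σ ++ [n])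
  | old {n σ i} : RestrictedGrowth n σ → i < n → RestrictedGrowth n (σ ++ [i])

namespace RestrictedGrowth

variable {β : Type*} {n : ℕ} {σ : List ℕ}

theorem mem_iff (hσ : RestrictedGrowth n σ) {i : ℕ} : i ∈ σ ↔ i < n := by
  induction hσ with
  | nil => simp
  | fresh _ ih => simp only [List.mem_append, ih, List.mem_singleton]; omega
  | old _ hi ih => simp only [List.mem_append, ih, List.mem_singleton]; omega

theorem pick_append (hσ : RestrictedGrowth n σ) {L : List β} (hn : n ≤ L.length)
    (M : List β) : pick σ (L ++ M) = pick σ L :=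
  List.filterMap_congr fun i hi => List.getElem?_append_left (by have := hσ.mem_iff.1 hi; omega)

theorem length_pick (hσ : RestrictedGrowth n σ) {L : List β} (hn : n ≤ L.length) :
    (pick σ L).length = σ.length := by
  induction hσ with
  | nil => rfl
  | @fresh n σ _ ih =>
    simp [pick_append_singleton, ih (by omega), List.getElem?_eq_getElem (by omega : n < L.length)]
  | @old n σ i _ hi ih =>
    simp [pick_append_singleton, ih hn, List.getElem?_eq_getElem (by omega : i < L.length)]

theorem firstAppear_pick_of_le {α : Type} [DecidableEq α] (hσ : RestrictedGrowth n σ) {L : List α}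
    (hn : n ≤ L.length) : firstAppear (pick σ L) = firstAppear (L.take n) := by
  induction hσ with
  | nil => simp [pick]
  | fresh _ ih =>
    rw [pick_append_singleton, List.take_add_one, firstAppear_append_congr (ih (by omega))]
  | @old n σ i hσ hi ih =>
    rw [pick_append_singleton, firstAppear_append_of_subset, ih hn]
    intro x hx
    rw [Option.mem_toList] at hx
    exact mem_pick.2 ⟨i, hσ.mem_iff.2 hi, hx⟩

theorem firstAppear_pick {α : Type} [DecidableEq α] {L : List α}
    (hσ : RestrictedGrowth L.length σ) : firstAppear (pick σ L) = firstAppear L := by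
  rw [hσ.firstAppear_pick_of_le le_rfl, List.take_length]

theorem mem_pick_iff {L : List β} (hσ : RestrictedGrowth L.length σ) {b : β} :
    b ∈ pick σ L ↔ b ∈ L := by
  rw [mem_pick, List.mem_iff_getElem?]
  exact ⟨fun ⟨i, _, hi⟩ => ⟨i, hi⟩,
    fun ⟨i, hi⟩ => ⟨i, hσ.mem_iff.2 (List.getElem?_eq_some_iff.1 hi).1, hi⟩⟩

theorem usedLetters_pick {Sig QT : Type} {col : Column Sig QT}
    (hσ : RestrictedGrowth col.length σ) : usedLetters (pick σ col) = usedLetters col := by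
  simp only [usedLetters, hσ.mem_pick_iff]

theorem exists_pick_append_singleton_eq {A B : List β} {τ : List ℕ}
    (hσ : RestrictedGrowth A.length σ) (hτ : RestrictedGrowth B.length τ)
    (h : pick σ A = pick τ B) {a : β} (ha : a ∈ B) :
    ∃ σ' τ', RestrictedGrowth (A ++ [a]).length σ' ∧ RestrictedGrowth B.length τ' ∧
      pick σ' (A ++ [a]) = pick τ' B := by
  obtain ⟨j, hj, rfl⟩ := List.getElem_of_mem ha
  refine ⟨σ ++ [A.length], τ ++ [j], by simpa using hσ.fresh, hτ.old hj, ?_⟩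
  rw [pick_append_singleton, pick_append_singleton, hσ.pick_append le_rfl, h,
    List.getElem?_concat_length, List.getElem?_eq_getElem hj]

end RestrictedGrowth

section LocalRefinement

variable {Sig QT : Type} {T : NFA (Sig × Sig) QT} {c : Sig}

theorem isLSR_nil : IsLSR T c [] := ⟨by simp, by simp⟩

theorem IsLSR.append_singleton {col : Column Sig QT} (hcol : IsLSR T c col) {r : Row Sig QT}
    (hstep : r.2.2 ∈ T.step r.1 r.2.1) (href : r.2.1.2 = c ∨ ∃ r' ∈ col, r.2.1.2 = r'.2.1.1) :
    IsLSR T c (col ++ [r]) := by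
  refine ⟨?_, fun i hi => ?_⟩
  · simp only [List.mem_append, List.mem_singleton]
    rintro r (hr | rfl)
    exacts [hcol.1 r hr, hstep]
  simp only [List.get_eq_getElem]
  rcases Nat.lt_or_ge i col.length with hi' | hi'
  · rw [List.getElem_append_left hi']
    rcases hcol.2 i hi' with h | ⟨i', hi'', hlt, h⟩
    · exact .inl h
    · exact .inr ⟨i', by simp; omega, hlt, by simpa [List.getElem_append_left hi''] using h⟩
  · have hi_eq : i = col.length := by simp at hi; omega
    subst hi_eq
    rw [List.getElem_concat_length rfl]
    rcases href with h | ⟨r', hr', h⟩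
    · exact .inl h
    · obtain ⟨i', hi', rfl⟩ := List.getElem_of_mem hr'
      exact .inr ⟨i', by simp; omega, hi', by simpa [List.getElem_append_left hi'] using h⟩

theorem IsLSR.pick_append_singleton {col : Column Sig QT} (hcol : IsLSR T c col) {σ : List ℕ}
    (hσ : IsLSR T c (pick σ col)) {x : ℕ} (hx : ∀ i < x, i ∈ σ) :
    IsLSR T c (pick (σ ++ [x]) col) := by
  rw [_root_.pick_append_singleton]
  cases hcx : col[x]? with
  | none => simpa
  | some r =>
    obtain ⟨hxlt, rfl⟩ := List.getElem?_eq_some_iff.1 hcx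
    refine hσ.append_singleton (hcol.1 _ (List.getElem_mem _)) ?_
    rcases hcol.2 x hxlt with h | ⟨i, hi, hlt, h⟩
    · exact .inl h
    · exact .inr ⟨col[i], mem_pick.2 ⟨i, hx i hlt, List.getElem?_eq_getElem hi⟩, h⟩

theorem RestrictedGrowth.isLSR_pick {n : ℕ} {σ : List ℕ} (hσ : RestrictedGrowth n σ)
    {col : Column Sig QT} (hcol : IsLSR T c col) : IsLSR T c (pick σ col) := by
  induction hσ with
  | nil => exact isLSR_nil
  | fresh hσ ih => exact hcol.pick_append_singleton ih fun i hi => hσ.mem_iff.2 hi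
  | old hσ hx ih => exact hcol.pick_append_singleton ih fun i hi => hσ.mem_iff.2 (hi.trans hx)

end LocalRefinement

theorem exists_pick_eq_pick {α : Type} [DecidableEq α] (A B : List α)
    (h : firstAppear A = firstAppear B) :
    ∃ σ τ, RestrictedGrowth A.length σ ∧ RestrictedGrowth B.length τ ∧ pick σ A = pick τ B := by
  rcases List.eq_nil_or_concat' A with rfl | ⟨A, a, rfl⟩
  · obtain rfl : B = [] := firstAppear_eq_nil.1 h.symm
    exact ⟨[], [], .nil, .nil, rfl⟩
  rcases List.eq_nil_or_concat' B with rfl | ⟨B, b, rfl⟩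
  · exact absurd (firstAppear_eq_nil.1 h) (by simp)
  have mem_iff {x : α} : x ∈ A ++ [a] ↔ x ∈ B ++ [b] := by
    rw [← mem_firstAppear, h, mem_firstAppear]
  by_cases ha : a ∈ A
  · rw [firstAppear_append_of_subset (by simpa using ha)] at h
    obtain ⟨σ, τ, hσ, hτ, hpick⟩ := exists_pick_eq_pick A (B ++ [b]) h
    exact hσ.exists_pick_append_singleton_eq hτ hpick ((mem_iff (x := a)).1 (by simp))
  by_cases hb : b ∈ B
  · rw [firstAppear_append_of_subset (l := B) (by simpa using hb)] at h
    obtain ⟨σ, τ, hσ, hτ, hpick⟩ := exists_pick_eq_pick (A ++ [a]) B h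
    obtain ⟨τ', σ', hτ', hσ', hpick'⟩ :=
      hτ.exists_pick_append_singleton_eq hσ hpick.symm ((mem_iff (x := b)).2 (by simp))
    exact ⟨σ', τ', hσ', hτ', hpick'.symm⟩
  rw [firstAppear_append_singleton_of_notMem ha, firstAppear_append_singleton_of_notMem hb] at h
  obtain ⟨hAB, hab⟩ := List.append_inj' h rfl
  obtain rfl := List.singleton_inj.1 hab
  obtain ⟨σ, τ, hσ, hτ, hpick⟩ := exists_pick_eq_pick A B hAB
  refine ⟨σ ++ [A.length], τ ++ [B.length], by simpa using hσ.fresh, by simpa using hτ.fresh, ?_⟩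
  rw [pick_append_singleton, pick_append_singleton, hσ.pick_append le_rfl,
    hτ.pick_append le_rfl, hpick, List.getElem?_concat_length, List.getElem?_concat_length]
termination_by A.length + B.length

section Table

variable {Sig QI QT : Type} {R : RTS Sig QI QT} {w z : List Sig} {F G : List (Column Sig QT)}

theorem isFSR_iff : IsFSR R w F ↔
    List.Forall₂ (IsLSR R.T) w F ∧ (∀ c ∈ F, ∀ c' ∈ F, c.length = c'.length) ∧
      List.IsChain (fun c c' => outgoing c = incoming c') F := by
  simp only [IsFSR, List.forall₂_iff_get, List.isChain_iff_getElem, List.get_eq_getElem]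
  constructor
  · rintro ⟨hlen, hlsr, hwidth, hglue⟩
    exact ⟨⟨hlen.symm, fun j hw hF => hlsr j hF hw⟩, hwidth, hglue⟩
  · rintro ⟨⟨hlen, hlsr⟩, hwidth, hglue⟩
    exact ⟨hlen.symm, fun j hF hw => hlsr j hw hF, hwidth, hglue⟩

theorem IsFSR.exists_width (hF : IsFSR R w F) :
    ∃ k, (∀ c ∈ F, c.length = k) ∧ (fIncoming F).length = k ∧ (fOutgoing F).length = k := by
  rcases F with _ | ⟨c, F⟩
  · exact ⟨0, by simp, rfl, rfl⟩
  have hwidth : ∀ c' ∈ c :: F, c'.length = c.length :=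
    fun c' hc' => hF.2.2.1 c' hc' c List.mem_cons_self
  refine ⟨c.length, hwidth, by simp [fIncoming, incoming], ?_⟩
  simp only [fOutgoing, outgoing, List.getLast?_eq_some_getLast (List.cons_ne_nil c F),
    Option.getD_some, List.length_map]
  exact hwidth _ (List.getLast_mem _)

theorem fIncoming_map_pick (σ : List ℕ) (F : List (Column Sig QT)) :
    fIncoming (F.map (pick σ)) = pick σ (fIncoming F) := by
  cases F <;> simp [fIncoming, incoming, pick_map]

theorem fOutgoing_map_pick (σ : List ℕ) (F : List (Column Sig QT)) :
    fOutgoing (F.map (pick σ)) = pick σ (fOutgoing F) := by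
  cases h : F.getLast? <;> simp [fOutgoing, outgoing, h, pick_map]

theorem fIncoming_append_of_glue (h : fOutgoing F = fIncoming G) :
    fIncoming (F ++ G) = fIncoming F := by
  cases F with
  | nil => exact h.symm
  | cons c F => rfl

theorem fOutgoing_append_of_glue (h : fOutgoing F = fIncoming G) :
    fOutgoing (F ++ G) = fOutgoing G := by
  rcases List.eq_nil_or_concat' G with rfl | ⟨G, c, rfl⟩
  · rw [List.append_nil]
    exact h
  · simp [fOutgoing]

theorem IsFSR.map_pick (hF : IsFSR R w F) {n : ℕ} {σ : List ℕ} (hσ : RestrictedGrowth n σ)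
    (hn : ∀ c ∈ F, c.length = n) : IsFSR R w (F.map (pick σ)) := by
  obtain ⟨hlsr, -, hglue⟩ := isFSR_iff.1 hF
  refine isFSR_iff.2 ⟨List.forall₂_map_right_iff.2 (hlsr.imp fun _ _ => hσ.isLSR_pick), ?_, ?_⟩
  · simp only [List.mem_map]
    rintro _ ⟨c, hc, rfl⟩ _ ⟨c', hc', rfl⟩
    rw [hσ.length_pick (hn c hc).ge, hσ.length_pick (hn c' hc').ge]
  · refine (List.isChain_map _).2 (hglue.imp fun c c' h => ?_)
    simp only [outgoing, incoming, ← pick_map] at h ⊢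
    rw [h]

theorem IsFSR.append (hF : IsFSR R w F) (hG : IsFSR R z G) (h : fOutgoing F = fIncoming G) :
    IsFSR R (w ++ z) (F ++ G) := by
  obtain ⟨hlsrF, -, hglueF⟩ := isFSR_iff.1 hF
  obtain ⟨hlsrG, -, hglueG⟩ := isFSR_iff.1 hG
  obtain ⟨k, hkF, -, hkout⟩ := hF.exists_width
  obtain ⟨k', hkG, hkin, -⟩ := hG.exists_width
  have hwidth : ∀ c ∈ F ++ G, c.length = k := by
    have hk : k' = k := by rw [← hkin, ← h, hkout]
    simp only [List.mem_append]
    rintro c (hc | hc)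
    exacts [hkF c hc, hk ▸ hkG c hc]
  refine isFSR_iff.2 ⟨List.rel_append hlsrF hlsrG, fun c hc c' hc' => ?_,
    List.isChain_append.2 ⟨hglueF, hglueG, fun c hc c' hc' => ?_⟩⟩
  · rw [hwidth c hc, hwidth c' hc']
  · obtain ⟨G, rfl⟩ := List.head?_eq_some_iff.1 hc'
    simpa [fOutgoing, Option.mem_def.1 hc, fIncoming] using h

end Table

theorem fsr_concat_general
    {Sig QI QT : Type} [DecidableEq QT]
    (R : RTS Sig QI QT) (w z : List Sig)
    (τw τz : List (Column Sig QT))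
    (hw : IsFSR R w τw) (hz : IsFSR R z τz)
    (h : firstAppear (fOutgoing τw) = firstAppear (fIncoming τz)) :
    ∃ τwz : List (Column Sig QT),
      IsFSR R (w ++ z) τwz ∧
      (∀ (j : ℕ) (h₁ : j < τw.length) (h₂ : j < τwz.length),
        usedLetters (τwz.get ⟨j, h₂⟩) = usedLetters (τw.get ⟨j, h₁⟩)) ∧
      (∀ (j : ℕ) (h₁ : j < τz.length) (h₂ : τw.length + j < τwz.length),
        usedLetters (τwz.get ⟨τw.length + j, h₂⟩) = usedLetters (τz.get ⟨j, h₁⟩)) ∧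
      firstAppear (fIncoming τwz) = firstAppear (fIncoming τw) ∧
      firstAppear (fOutgoing τwz) = firstAppear (fOutgoing τz) := by
  obtain ⟨m, hmw, hinw, houtw⟩ := hw.exists_width
  obtain ⟨k, hkz, hinz, houtz⟩ := hz.exists_width
  obtain ⟨σ, τ, hσ, hτ, hpick⟩ := exists_pick_eq_pick _ _ h
  rw [houtw] at hσ
  rw [hinz] at hτ
  have hglue : fOutgoing (τw.map (pick σ)) = fIncoming (τz.map (pick τ)) := by
    rw [fOutgoing_map_pick, fIncoming_map_pick, hpick]
  refine ⟨τw.map (pick σ) ++ τz.map (pick τ),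
    (hw.map_pick hσ hmw).append (hz.map_pick hτ hkz) hglue,
    fun j h₁ _ => ?_, fun j h₁ _ => ?_, ?_, ?_⟩
  · simpa [List.getElem_append_left, h₁] using
      RestrictedGrowth.usedLetters_pick (by rwa [hmw _ (List.getElem_mem h₁)])
  · simpa [List.getElem_append_right] using
      RestrictedGrowth.usedLetters_pick (by rwa [hkz _ (List.getElem_mem h₁)])
  · rw [fIncoming_append_of_glue hglue, fIncoming_map_pick,
      RestrictedGrowth.firstAppear_pick (by rwa [hinw])]
  · rw [fOutgoing_append_of_glue hglue, fOutgoing_map_pick,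
      RestrictedGrowth.firstAppear_pick (by rwa [houtz])]

/-- Lemma `lem:fragment`: fragment separation refinements can be
concatenated. If `τ_w` and `τ_z` are fragment separation refinements for `w` and
`z` whose first-appearance lists of outgoing (resp. incoming) states coincide,
then there is a fragment separation refinement `τ_{wz}` for `w ++ z` with the
same sets of used source letters at corresponding positions, the same
first-appearance list of incoming states as `τ_w`, and the same first-appearance
list of outgoing states as `τ_z`. -/
theorem fsr_concat
    {Sig QI QT : Type} [Fintype Sig] [Fintype QI] [Fintype QT] [DecidableEq QT]
    (R : RTS Sig QI QT) (w z : List Sig)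
    (τw τz : List (Column Sig QT))
    (hw : IsFSR R w τw) (hz : IsFSR R z τz)
    (h : firstAppear (fOutgoing τw) = firstAppear (fIncoming τz)) :
    ∃ τwz : List (Column Sig QT),
      IsFSR R (w ++ z) τwz ∧
      (∀ (j : ℕ) (h₁ : j < τw.length) (h₂ : j < τwz.length),
        usedLetters (τwz.get ⟨j, h₂⟩) = usedLetters (τw.get ⟨j, h₁⟩)) ∧
      (∀ (j : ℕ) (h₁ : j < τz.length) (h₂ : τw.length + j < τwz.length),
        usedLetters (τwz.get ⟨τw.length + j, h₂⟩) = usedLetters (τz.get ⟨j, h₁⟩)) ∧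
      firstAppear (fIncoming τwz) = firstAppear (fIncoming τw) ∧
      firstAppear (fOutgoing τwz) = firstAppear (fOutgoing τz) :=
  fsr_concat_general R w z τw τz hw hz h
end
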